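/- arXiv:2105.13339 — 9 statements merged into one kernel-verified Lean document; each statement's English description precedes it below -/
import Mathlib

section
/- For every Z ∈ m and every natural number n, ad_{JZ}^{2n} = -J ∘ ad_Z^{2n} ∘ J as ℂ-linear maps from m to m. -/
/-!
On `m` we have `J² = -1`, and `J` intertwines the brackets: `⁅J x, J y⁆ = ⁅x, y⁆` for `x, y ∈ m`
(the `m⁺m⁺` and `m⁻m⁻` terms vanish and `i · (-i) = 1`), while `J ⁅x, y⁆ = ⁅J x, y⁆` for `x ∈ m`,
`y ∈ k`. Since `ad_Z` swaps `m` and `k`, this gives `ad_{JZ}² = -J ∘ ad_Z² ∘ J` on `m`, i.e.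
`ad_{JZ}²` is the conjugate of `ad_Z²` by `J` (as `J⁻¹ = -J` on `m`), and conjugation commutes
with powers.
-/

theorem Module.End.pow_apply_eq_neg_apply_pow_apply {R V : Type*} [CommRing R] [AddCommGroup V]
    [Module R V] {m : Submodule R V} {J A B : Module.End R V}
    (hJm : ∀ w ∈ m, J w ∈ m) (hJJ : ∀ w ∈ m, J (J w) = -w) (hBm : ∀ w ∈ m, B w ∈ m)
    (hAB : ∀ w ∈ m, A w = -J (B (J w))) (n : ℕ) :
    ∀ w ∈ m, (A ^ n) w = -J ((B ^ n) (J w)) := by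
  induction n with
  | zero => intro w hw; simp [hJJ w hw]
  | succ n ih =>
    intro w hw
    have hBJw : B (J w) ∈ m := hBm _ (hJm w hw)
    have hAw : A w ∈ m := hAB w hw ▸ m.neg_mem (hJm _ hBJw)
    rw [pow_succ, Module.End.mul_apply, ih _ hAw, hAB w hw, map_neg, hJJ _ hBJw, neg_neg,
      pow_succ, Module.End.mul_apply]

section

variable {L : Type*} [LieRing L] [LieAlgebra ℂ L] {k mp mn : Submodule ℂ L}

theorem lie_mem_of_mem_of_forall_lie_mem {p : Submodule ℂ L} (hkp : ∀ x ∈ k, ∀ y ∈ p, ⁅x, y⁆ ∈ p)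
    {x y : L} (hx : x ∈ p) (hy : y ∈ k) : ⁅x, y⁆ ∈ p :=
  lie_skew x y ▸ p.neg_mem (hkp y hy x hx)

theorem lie_mem_sup_of_mem_sup_of_mem (hkp : ∀ x ∈ k, ∀ y ∈ mp, ⁅x, y⁆ ∈ mp)
    (hkn : ∀ x ∈ k, ∀ y ∈ mn, ⁅x, y⁆ ∈ mn) {x y : L} (hx : x ∈ mp ⊔ mn) (hy : y ∈ k) :
    ⁅x, y⁆ ∈ mp ⊔ mn := by
  obtain ⟨xp, hxp, xn, hxn, rfl⟩ := Submodule.mem_sup.mp hx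
  rw [add_lie]
  exact add_mem (Submodule.mem_sup_left (lie_mem_of_mem_of_forall_lie_mem hkp hxp hy))
    (Submodule.mem_sup_right (lie_mem_of_mem_of_forall_lie_mem hkn hxn hy))

theorem lie_mem_of_mem_sup_of_mem_sup (hpp : ∀ x ∈ mp, ∀ y ∈ mp, ⁅x, y⁆ = 0)
    (hnn : ∀ x ∈ mn, ∀ y ∈ mn, ⁅x, y⁆ = 0) (hpn : ∀ x ∈ mp, ∀ y ∈ mn, ⁅x, y⁆ ∈ k)
    {x y : L} (hx : x ∈ mp ⊔ mn) (hy : y ∈ mp ⊔ mn) : ⁅x, y⁆ ∈ k := by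
  obtain ⟨xp, hxp, xn, hxn, rfl⟩ := Submodule.mem_sup.mp hx
  obtain ⟨yp, hyp, yn, hyn, rfl⟩ := Submodule.mem_sup.mp hy
  rw [add_lie, lie_add, lie_add, hpp xp hxp yp hyp, hnn xn hxn yn hyn, ← lie_skew xn yp]
  simpa using add_mem (hpn xp hxp yn hyn) (k.neg_mem (hpn yp hyp xn hxn))

theorem ad_sq_apply_mem_sup (hkp : ∀ x ∈ k, ∀ y ∈ mp, ⁅x, y⁆ ∈ mp)
    (hkn : ∀ x ∈ k, ∀ y ∈ mn, ⁅x, y⁆ ∈ mn) (hpp : ∀ x ∈ mp, ∀ y ∈ mp, ⁅x, y⁆ = 0)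
    (hnn : ∀ x ∈ mn, ∀ y ∈ mn, ⁅x, y⁆ = 0) (hpn : ∀ x ∈ mp, ∀ y ∈ mn, ⁅x, y⁆ ∈ k)
    {z w : L} (hz : z ∈ mp ⊔ mn) (hw : w ∈ mp ⊔ mn) :
    (LieAlgebra.ad ℂ L z ^ 2) w ∈ mp ⊔ mn := by
  rw [sq, Module.End.mul_apply, LieAlgebra.ad_apply, LieAlgebra.ad_apply]
  exact lie_mem_sup_of_mem_sup_of_mem hkp hkn hz (lie_mem_of_mem_sup_of_mem_sup hpp hnn hpn hz hw)

variable {J : L →ₗ[ℂ] L}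

theorem apply_mem_sup_of_mem_sup (hJp : ∀ x ∈ mp, J x = Complex.I • x)
    (hJn : ∀ x ∈ mn, J x = -(Complex.I • x)) {w : L} (hw : w ∈ mp ⊔ mn) : J w ∈ mp ⊔ mn := by
  obtain ⟨wp, hwp, wn, hwn, rfl⟩ := Submodule.mem_sup.mp hw
  rw [map_add, hJp wp hwp, hJn wn hwn]
  exact add_mem (Submodule.mem_sup_left (mp.smul_mem _ hwp))
    (Submodule.mem_sup_right (mn.neg_mem (mn.smul_mem _ hwn)))

theorem apply_apply_of_mem_sup (hJp : ∀ x ∈ mp, J x = Complex.I • x)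
    (hJn : ∀ x ∈ mn, J x = -(Complex.I • x)) {w : L} (hw : w ∈ mp ⊔ mn) : J (J w) = -w := by
  obtain ⟨wp, hwp, wn, hwn, rfl⟩ := Submodule.mem_sup.mp hw
  simp only [map_add, map_neg, map_smul, hJp wp hwp, hJn wn hwn, smul_neg, smul_smul,
    Complex.I_mul_I, neg_smul, one_smul, neg_neg, neg_add]

theorem apply_lie_of_mem_sup_of_mem (hJp : ∀ x ∈ mp, J x = Complex.I • x)
    (hJn : ∀ x ∈ mn, J x = -(Complex.I • x)) (hkp : ∀ x ∈ k, ∀ y ∈ mp, ⁅x, y⁆ ∈ mp)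
    (hkn : ∀ x ∈ k, ∀ y ∈ mn, ⁅x, y⁆ ∈ mn) {x y : L} (hx : x ∈ mp ⊔ mn) (hy : y ∈ k) :
    J ⁅x, y⁆ = ⁅J x, y⁆ := by
  obtain ⟨xp, hxp, xn, hxn, rfl⟩ := Submodule.mem_sup.mp hx
  rw [add_lie, map_add, map_add, add_lie, hJp xp hxp, hJn xn hxn,
    hJp _ (lie_mem_of_mem_of_forall_lie_mem hkp hxp hy),
    hJn _ (lie_mem_of_mem_of_forall_lie_mem hkn hxn hy), neg_lie, smul_lie, smul_lie]

theorem lie_apply_apply_of_mem_sup (hJp : ∀ x ∈ mp, J x = Complex.I • x)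
    (hJn : ∀ x ∈ mn, J x = -(Complex.I • x)) (hpp : ∀ x ∈ mp, ∀ y ∈ mp, ⁅x, y⁆ = 0)
    (hnn : ∀ x ∈ mn, ∀ y ∈ mn, ⁅x, y⁆ = 0) {x y : L} (hx : x ∈ mp ⊔ mn) (hy : y ∈ mp ⊔ mn) :
    ⁅J x, J y⁆ = ⁅x, y⁆ := by
  obtain ⟨xp, hxp, xn, hxn, rfl⟩ := Submodule.mem_sup.mp hx
  obtain ⟨yp, hyp, yn, hyn, rfl⟩ := Submodule.mem_sup.mp hy
  simp only [map_add, hJp _ hxp, hJn _ hxn, hJp _ hyp, hJn _ hyn, add_lie, lie_add, neg_lie,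
    lie_neg, smul_lie, lie_smul, hpp xp hxp yp hyp, hnn xn hxn yn hyn]
  match_scalars <;> simp

theorem ad_apply_sq_apply_of_mem_sup (hJp : ∀ x ∈ mp, J x = Complex.I • x)
    (hJn : ∀ x ∈ mn, J x = -(Complex.I • x)) (hkp : ∀ x ∈ k, ∀ y ∈ mp, ⁅x, y⁆ ∈ mp)
    (hkn : ∀ x ∈ k, ∀ y ∈ mn, ⁅x, y⁆ ∈ mn) (hpp : ∀ x ∈ mp, ∀ y ∈ mp, ⁅x, y⁆ = 0)
    (hnn : ∀ x ∈ mn, ∀ y ∈ mn, ⁅x, y⁆ = 0) (hpn : ∀ x ∈ mp, ∀ y ∈ mn, ⁅x, y⁆ ∈ k)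
    {z w : L} (hz : z ∈ mp ⊔ mn) (hw : w ∈ mp ⊔ mn) :
    (LieAlgebra.ad ℂ L (J z) ^ 2) w = -J ((LieAlgebra.ad ℂ L z ^ 2) (J w)) := by
  have hJw := apply_mem_sup_of_mem_sup hJp hJn hw
  have hzJw : ⁅z, J w⁆ ∈ k := lie_mem_of_mem_sup_of_mem_sup hpp hnn hpn hz hJw
  calc (LieAlgebra.ad ℂ L (J z) ^ 2) w = ⁅J z, ⁅J z, w⁆⁆ := by simp [sq]
    _ = ⁅J z, -⁅z, J w⁆⁆ := by
      rw [← lie_apply_apply_of_mem_sup hJp hJn hpp hnn hz hJw,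
        apply_apply_of_mem_sup hJp hJn hw]
      simp only [lie_neg, neg_neg]
    _ = -J ⁅z, ⁅z, J w⁆⁆ := by rw [lie_neg, apply_lie_of_mem_sup_of_mem hJp hJn hkp hkn hz hzJw]
    _ = -J ((LieAlgebra.ad ℂ L z ^ 2) (J w)) := by simp [sq]

end

theorem statement1_general
    (L : Type*) [LieRing L] [LieAlgebra ℂ L]
    (k mp mn : Submodule ℂ L)
    (hkp : ∀ x ∈ k, ∀ y ∈ mp, ⁅x, y⁆ ∈ mp)
    (hkn : ∀ x ∈ k, ∀ y ∈ mn, ⁅x, y⁆ ∈ mn)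
    (hpp : ∀ x ∈ mp, ∀ y ∈ mp, ⁅x, y⁆ = 0)
    (hnn : ∀ x ∈ mn, ∀ y ∈ mn, ⁅x, y⁆ = 0)
    (hpn : ∀ x ∈ mp, ∀ y ∈ mn, ⁅x, y⁆ ∈ k)
    (J : L →ₗ[ℂ] L)
    (hJp : ∀ x ∈ mp, J x = Complex.I • x)
    (hJn : ∀ x ∈ mn, J x = -(Complex.I • x))
    (Z : L) (hZ : Z ∈ mp ⊔ mn) (n : ℕ) :
    ∀ W ∈ mp ⊔ mn,
      ((LieAlgebra.ad ℂ L (J Z)) ^ (2 * n)) W =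
        -(J (((LieAlgebra.ad ℂ L Z) ^ (2 * n)) (J W))) := by
  rw [pow_mul, pow_mul]
  exact Module.End.pow_apply_eq_neg_apply_pow_apply
    (fun _ hw ↦ apply_mem_sup_of_mem_sup hJp hJn hw)
    (fun _ hw ↦ apply_apply_of_mem_sup hJp hJn hw)
    (fun _ hw ↦ ad_sq_apply_mem_sup hkp hkn hpp hnn hpn hZ hw)
    (fun _ hw ↦ ad_apply_sq_apply_of_mem_sup hJp hJn hkp hkn hpp hnn hpn hZ hw) n

/-- For every Z ∈ m and every natural number n,
ad_{JZ}^{2n} = -J ∘ ad_Z^{2n} ∘ J as ℂ-linear maps from m to m. -/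
theorem statement1
    (L : Type*) [LieRing L] [LieAlgebra ℂ L] [Module.Finite ℂ L]
    (k mp mn : Submodule ℂ L)
    (hsup : k ⊔ (mp ⊔ mn) = ⊤)
    (hd1 : Disjoint k (mp ⊔ mn))
    (hd2 : Disjoint mp mn)
    (hkk : ∀ x ∈ k, ∀ y ∈ k, ⁅x, y⁆ ∈ k)
    (hkp : ∀ x ∈ k, ∀ y ∈ mp, ⁅x, y⁆ ∈ mp)
    (hkn : ∀ x ∈ k, ∀ y ∈ mn, ⁅x, y⁆ ∈ mn)
    (hpp : ∀ x ∈ mp, ∀ y ∈ mp, ⁅x, y⁆ = 0)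
    (hnn : ∀ x ∈ mn, ∀ y ∈ mn, ⁅x, y⁆ = 0)
    (hpn : ∀ x ∈ mp, ∀ y ∈ mn, ⁅x, y⁆ ∈ k)
    (J : L →ₗ[ℂ] L)
    (hJp : ∀ x ∈ mp, J x = Complex.I • x)
    (hJn : ∀ x ∈ mn, J x = -(Complex.I • x))
    (Z : L) (hZ : Z ∈ mp ⊔ mn) (n : ℕ) :
    ∀ W ∈ mp ⊔ mn,
      ((LieAlgebra.ad ℂ L (J Z)) ^ (2 * n)) W =
        -(J (((LieAlgebra.ad ℂ L Z) ^ (2 * n)) (J W))) :=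
  statement1_general L k mp mn hkp hkn hpp hnn hpn J hJp hJn Z hZ n
end

section
/- For every Z ∈ m, the operators ad_{JZ}² and ad_Z² commute as ℂ-linear endomorphisms of m, i.e. ad_{JZ}²(ad_Z²(W)) = ad_Z²(ad_{JZ}²(W)) for all W ∈ m. -/
/-!
Write `Z = P + N` with `P ∈ m⁺`, `N ∈ m⁻`, so that `JZ = i (P - N)` and `ad_{JZ}² = -ad_{P-N}²`.
Expanding `ad_{P∓N}² = ad_P² + ad_N² ∓ (ad_P ad_N + ad_N ad_P)` and letting both sides act on
`V ∈ m⁺`, the grading kills every term except `ad_N² ad_P ad_N V` and `ad_N ad_P ad_N² V`, whose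
difference is `⁅N, ⁅⁅N, P⁆, ⁅N, V⁆⁆⁆`. That this vanishes is a Jacobi-identity computation which
only uses `⁅P, V⁆ = 0` and `ad_N³ = 0` on `P` and `V`: it yields `3 ⁅N, ⁅⁅N, P⁆, ⁅N, V⁆⁆⁆ = 0`.
The case `V ∈ m⁻` is symmetric.
-/

section LieRing

variable {L : Type*} [LieRing L]

theorem lie_lie_lie_lie_eq_zero [IsAddTorsionFree L] {N P W : L}
    (hP : ⁅N, ⁅N, ⁅N, P⁆⁆⁆ = 0) (hW : ⁅N, ⁅N, ⁅N, W⁆⁆⁆ = 0) (hPW : ⁅P, W⁆ = 0) :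
    ⁅N, ⁅⁅N, P⁆, ⁅N, W⁆⁆⁆ = 0 := by
  have expand : ∀ X Y : L, ⁅N, ⁅N, ⁅N, X⁆⁆⁆ = 0 →
      ⁅N, ⁅⁅N, X⁆, ⁅N, Y⁆⁆⁆ = -⁅⁅N, ⁅N, X⁆⁆, ⁅N, Y⁆⁆ + ⁅N, ⁅N, ⁅⁅N, X⁆, Y⁆⁆⁆ := by
    intro X Y hX
    have hu : ⁅N, ⁅⁅N, ⁅N, X⁆⁆, Y⁆⁆ = ⁅⁅N, ⁅N, X⁆⁆, ⁅N, Y⁆⁆ := by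
      rw [leibniz_lie, hX, zero_lie, zero_add]
    rw [leibniz_lie ⁅N, X⁆ N Y, ← lie_skew ⁅N, X⁆ N, neg_lie, lie_add, lie_neg, hu]
  have hsymm : ⁅⁅N, P⁆, W⁆ = ⁅⁅N, W⁆, P⁆ := by
    rw [lie_lie, hPW, lie_zero, zero_sub, lie_skew]
  have hanti : ⁅N, ⁅⁅N, P⁆, ⁅N, W⁆⁆⁆ = ⁅⁅N, ⁅N, P⁆⁆, ⁅N, W⁆⁆ - ⁅⁅N, ⁅N, W⁆⁆, ⁅N, P⁆⁆ := by
    rw [leibniz_lie, sub_eq_add_neg, lie_skew]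
  have hexpPW := expand P W hP
  have hexpWP := expand W P hW
  rw [← lie_skew ⁅N, W⁆ ⁅N, P⁆, lie_neg, ← hsymm] at hexpWP
  have h3 : 3 • ⁅N, ⁅⁅N, P⁆, ⁅N, W⁆⁆⁆ = 0 := by
    linear_combination (norm := abel) hexpPW - hexpWP + hanti
  exact (nsmul_eq_zero_iff_right (by norm_num)).mp h3

theorem lie_sub_lie_sub_lie_add_lie_add_comm [IsAddTorsionFree L] {P N V : L}
    (hPV : ⁅P, V⁆ = 0) (hNP : ⁅N, ⁅N, ⁅N, P⁆⁆⁆ = 0) (hNV : ⁅N, ⁅N, ⁅N, V⁆⁆⁆ = 0)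
    (hPNV : ⁅P, ⁅P, ⁅N, V⁆⁆⁆ = 0) :
    ⁅P - N, ⁅P - N, ⁅P + N, ⁅P + N, V⁆⁆⁆⁆ = ⁅P + N, ⁅P + N, ⁅P - N, ⁅P - N, V⁆⁆⁆⁆ := by
  have key := lie_lie_lie_lie_eq_zero hNP hNV hPV
  rw [lie_lie, lie_sub, sub_eq_zero] at key
  simp only [lie_add, add_lie, lie_sub, sub_lie, lie_neg, hPV, hPNV, hNV,
    add_zero, zero_add, sub_zero, zero_sub]
  rw [key]
  abel

section Graded

variable {R : Type*} [Ring R] [Module R L] {k m₁ m₂ : Submodule R L}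

theorem lie_sub_lie_sub_lie_add_lie_add_comm_of_mem [IsAddTorsionFree L]
    (h₁₁ : ∀ x ∈ m₁, ∀ y ∈ m₁, ⁅x, y⁆ = 0) (h₂₂ : ∀ x ∈ m₂, ∀ y ∈ m₂, ⁅x, y⁆ = 0)
    (h₂₁ : ∀ x ∈ m₂, ∀ y ∈ m₁, ⁅x, y⁆ ∈ k)
    (hk₁ : ∀ x ∈ k, ∀ y ∈ m₁, ⁅x, y⁆ ∈ m₁) (hk₂ : ∀ x ∈ k, ∀ y ∈ m₂, ⁅x, y⁆ ∈ m₂)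
    {P N V : L} (hP : P ∈ m₁) (hN : N ∈ m₂) (hV : V ∈ m₁) :
    ⁅P - N, ⁅P - N, ⁅P + N, ⁅P + N, V⁆⁆⁆⁆ = ⁅P + N, ⁅P + N, ⁅P - N, ⁅P - N, V⁆⁆⁆⁆ := by
  have hN₃ : ∀ X ∈ m₁, ⁅N, ⁅N, ⁅N, X⁆⁆⁆ = 0 := fun X hX ↦ h₂₂ N hN _ <| by
    rw [← lie_skew]
    exact m₂.neg_mem (hk₂ _ (h₂₁ N hN X hX) N hN)
  have hPNV : ⁅P, ⁅N, V⁆⁆ ∈ m₁ := by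
    rw [← lie_skew]
    exact m₁.neg_mem (hk₁ _ (h₂₁ N hN V hV) P hP)
  exact lie_sub_lie_sub_lie_add_lie_add_comm (h₁₁ P hP V hV) (hN₃ P hP) (hN₃ V hV)
    (h₁₁ P hP _ hPNV)

end Graded

end LieRing

theorem statement2_general
    (L : Type*) [LieRing L] [LieAlgebra ℂ L]
    (k mp mn : Submodule ℂ L)
    (hkp : ∀ x ∈ k, ∀ y ∈ mp, ⁅x, y⁆ ∈ mp)
    (hkn : ∀ x ∈ k, ∀ y ∈ mn, ⁅x, y⁆ ∈ mn)
    (hpp : ∀ x ∈ mp, ∀ y ∈ mp, ⁅x, y⁆ = 0)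
    (hnn : ∀ x ∈ mn, ∀ y ∈ mn, ⁅x, y⁆ = 0)
    (hpn : ∀ x ∈ mp, ∀ y ∈ mn, ⁅x, y⁆ ∈ k)
    (J : L →ₗ[ℂ] L)
    (hJp : ∀ x ∈ mp, J x = Complex.I • x)
    (hJn : ∀ x ∈ mn, J x = -(Complex.I • x))
    (Z : L) (hZ : Z ∈ mp ⊔ mn) :
    ∀ W ∈ mp ⊔ mn,
      ⁅J Z, ⁅J Z, ⁅Z, ⁅Z, W⁆⁆⁆⁆ = ⁅Z, ⁅Z, ⁅J Z, ⁅J Z, W⁆⁆⁆⁆ := by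
  intro W hW
  have : IsAddTorsionFree L := .of_isTorsionFree ℂ L
  obtain ⟨P, hP, N, hN, rfl⟩ := Submodule.mem_sup.mp hZ
  obtain ⟨W₁, hW₁, W₂, hW₂, rfl⟩ := Submodule.mem_sup.mp hW
  have hJZ : J (P + N) = Complex.I • (P - N) := by
    rw [map_add, hJp P hP, hJn N hN, smul_sub, sub_eq_add_neg]
  have ad_JZ_sq (x : L) : ⁅J (P + N), ⁅J (P + N), x⁆⁆ = -⁅P - N, ⁅P - N, x⁆⁆ := by
    rw [hJZ, smul_lie, smul_lie, lie_smul, smul_smul, Complex.I_mul_I, neg_one_smul]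
  have hnp : ∀ x ∈ mn, ∀ y ∈ mp, ⁅x, y⁆ ∈ k := fun x hx y hy ↦ by
    rw [← lie_skew]
    exact k.neg_mem (hpn y hy x hx)
  have h₁ := lie_sub_lie_sub_lie_add_lie_add_comm_of_mem hpp hnn hnp hkp hkn hP hN hW₁
  have h₂ := lie_sub_lie_sub_lie_add_lie_add_comm_of_mem hnn hpp hpn hkn hkp hN hP hW₂
  rw [add_comm N P, ← neg_sub P N] at h₂
  simp only [neg_lie, lie_neg, neg_neg] at h₂
  simp only [ad_JZ_sq, lie_neg, lie_add, h₁, h₂]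

/-- For every Z ∈ m, the operators ad_{JZ}² and ad_Z² commute as ℂ-linear
endomorphisms of m: ad_{JZ}²(ad_Z²(W)) = ad_Z²(ad_{JZ}²(W)) for all W ∈ m. -/
theorem statement2
    (L : Type*) [LieRing L] [LieAlgebra ℂ L] [Module.Finite ℂ L]
    (k mp mn : Submodule ℂ L)
    (hsup : k ⊔ (mp ⊔ mn) = ⊤)
    (hd1 : Disjoint k (mp ⊔ mn))
    (hd2 : Disjoint mp mn)
    (hkk : ∀ x ∈ k, ∀ y ∈ k, ⁅x, y⁆ ∈ k)
    (hkp : ∀ x ∈ k, ∀ y ∈ mp, ⁅x, y⁆ ∈ mp)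
    (hkn : ∀ x ∈ k, ∀ y ∈ mn, ⁅x, y⁆ ∈ mn)
    (hpp : ∀ x ∈ mp, ∀ y ∈ mp, ⁅x, y⁆ = 0)
    (hnn : ∀ x ∈ mn, ∀ y ∈ mn, ⁅x, y⁆ = 0)
    (hpn : ∀ x ∈ mp, ∀ y ∈ mn, ⁅x, y⁆ ∈ k)
    (J : L →ₗ[ℂ] L)
    (hJp : ∀ x ∈ mp, J x = Complex.I • x)
    (hJn : ∀ x ∈ mn, J x = -(Complex.I • x))
    (Z : L) (hZ : Z ∈ mp ⊔ mn) :
    ∀ W ∈ mp ⊔ mn,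
      ⁅J Z, ⁅J Z, ⁅Z, ⁅Z, W⁆⁆⁆⁆ = ⁅Z, ⁅Z, ⁅J Z, ⁅J Z, W⁆⁆⁆⁆ :=
  statement2_general L k mp mn hkp hkn hpp hnn hpn J hJp hJn Z hZ
end

section
/- For every Z ∈ m and all natural numbers j and k, the operators ad_{JZ}^{2j} and ad_Z^{2k} commute as ℂ-linear endomorphisms of m. -/
/-!
Write `Z = a + b` with `a ∈ m⁺`, `b ∈ m⁻`. Then `JZ = i (a - b)`, so `ad_{JZ}² = -ad_{a-b}²`, and it
suffices that `ad_{a+b}²` and `ad_{a-b}²` commute on `m`. On `w ∈ m⁺`, with `A = ad_a`, `B = ad_b`,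
the grading gives `A w = 0`, `A² B w = 0`, `B³ w = 0`, and the commutator applied to `w` reduces to
`2 (B A B² - B² A B) w`. This vanishes because `ad [b, [b, [b, a]]] = B³A - 3B²AB + 3BAB² - AB³` is
zero, `m⁻` being abelian. The case `w ∈ m⁻` is the same with `m⁺` and `m⁻` exchanged.
-/

attribute [local instance] LieRing.ofAssociativeRing

open LieAlgebra

namespace Module.End

section CommRing

variable {R M : Type*} [CommRing R] [AddCommGroup M] [Module R M]

theorem add_sq_mul_sub_sq_apply_comm {A B : Module.End R M} {w : M} (hA : A w = 0)
    (hAAB : (A ^ 2 * B) w = 0) (hB : (B ^ 3) w = 0) (h : (B ^ 2 * A * B) w = (B * A * B ^ 2) w) :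
    ((A + B) ^ 2 * (A - B) ^ 2) w = ((A - B) ^ 2 * (A + B) ^ 2) w := by
  simp only [pow_succ, pow_zero, one_mul, mul_apply] at hAAB hB h ⊢
  simp only [LinearMap.add_apply, LinearMap.sub_apply, map_add, map_sub, hA, hAAB, hB, map_zero]
  linear_combination (norm := module) (-2 : R) • h

theorem pow_mul_pow_apply_comm_of_forall_mem {p : Submodule R M} {f g : Module.End R M}
    (hf : ∀ x ∈ p, f x ∈ p) (hg : ∀ x ∈ p, g x ∈ p) (hfg : ∀ x ∈ p, (f * g) x = (g * f) x)
    (m n : ℕ) {x : M} (hx : x ∈ p) : (f ^ m * g ^ n) x = (g ^ n * f ^ m) x := by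
  have hcomm : Commute (f.restrict hf) (g.restrict hg) :=
    LinearMap.ext fun y ↦ Subtype.ext (hfg y y.2)
  have hpow := hcomm.pow_pow m n
  rw [pow_restrict, pow_restrict] at hpow
  exact congr(($hpow ⟨x, hx⟩ : M))

end CommRing

theorem sq_mul_mul_apply_eq_of_lie_lie_lie_eq_zero {K M : Type*} [Field K] [AddCommGroup M]
    [Module K M] {A B : Module.End K M} {w : M} (h3 : (3 : K) ≠ 0)
    (hBA : ⁅B, ⁅B, ⁅B, A⁆⁆⁆ = 0) (hA : A w = 0) (hB : (B ^ 3) w = 0) :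
    (B ^ 2 * A * B) w = (B * A * B ^ 2) w := by
  have h := LinearMap.congr_fun hBA w
  simp only [pow_succ, pow_zero, one_mul, mul_apply] at hB ⊢
  simp only [Ring.lie_def, mul_sub, sub_mul, ← mul_assoc, LinearMap.sub_apply, mul_apply, hA, hB,
    map_zero, LinearMap.zero_apply] at h
  have h' : (3 : K) • (B (B (A (B w))) - B (A (B (B w)))) = 0 := by
    linear_combination (norm := module) -h
  exact sub_eq_zero.mp ((smul_eq_zero.mp h').resolve_left h3)

end Module.End

/-- The bracket relations of a grading `m⁻ ⊕ k ⊕ m⁺` of a Lie algebra in degrees `-1, 0, 1`. -/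
structure IsShortGrading {R L : Type*} [CommRing R] [LieRing L] [LieAlgebra R L]
    (k mp mn : Submodule R L) : Prop where
  lie_zero_pos_mem : ∀ x ∈ k, ∀ y ∈ mp, ⁅x, y⁆ ∈ mp
  lie_zero_neg_mem : ∀ x ∈ k, ∀ y ∈ mn, ⁅x, y⁆ ∈ mn
  lie_pos_pos_eq_zero : ∀ x ∈ mp, ∀ y ∈ mp, ⁅x, y⁆ = 0
  lie_neg_neg_eq_zero : ∀ x ∈ mn, ∀ y ∈ mn, ⁅x, y⁆ = 0
  lie_pos_neg_mem : ∀ x ∈ mp, ∀ y ∈ mn, ⁅x, y⁆ ∈ k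

namespace IsShortGrading

section CommRing

variable {R L : Type*} [CommRing R] [LieRing L] [LieAlgebra R L] {k mp mn : Submodule R L}

theorem lie_neg_pos_mem (G : IsShortGrading k mp mn) {x y : L} (hx : x ∈ mn) (hy : y ∈ mp) :
    ⁅x, y⁆ ∈ k := by
  rw [← lie_skew]
  exact neg_mem (G.lie_pos_neg_mem y hy x hx)

theorem lie_pos_zero_mem (G : IsShortGrading k mp mn) {x y : L} (hx : x ∈ mp) (hy : y ∈ k) :
    ⁅x, y⁆ ∈ mp := by
  rw [← lie_skew]
  exact neg_mem (G.lie_zero_pos_mem y hy x hx)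

theorem lie_neg_zero_mem (G : IsShortGrading k mp mn) {x y : L} (hx : x ∈ mn) (hy : y ∈ k) :
    ⁅x, y⁆ ∈ mn := by
  rw [← lie_skew]
  exact neg_mem (G.lie_zero_neg_mem y hy x hx)

theorem symm (G : IsShortGrading k mp mn) : IsShortGrading k mn mp :=
  ⟨G.lie_zero_neg_mem, G.lie_zero_pos_mem, G.lie_neg_neg_eq_zero, G.lie_pos_pos_eq_zero,
    fun _ hx _ hy ↦ G.lie_neg_pos_mem hx hy⟩

theorem lie_mem_of_mem_sup (G : IsShortGrading k mp mn) {x y : L} (hx : x ∈ mp ⊔ mn)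
    (hy : y ∈ mp ⊔ mn) : ⁅x, y⁆ ∈ k := by
  obtain ⟨x₁, hx₁, x₂, hx₂, rfl⟩ := Submodule.mem_sup.mp hx
  obtain ⟨y₁, hy₁, y₂, hy₂, rfl⟩ := Submodule.mem_sup.mp hy
  rw [add_lie, lie_add, lie_add, G.lie_pos_pos_eq_zero x₁ hx₁ y₁ hy₁,
    G.lie_neg_neg_eq_zero x₂ hx₂ y₂ hy₂, zero_add, add_zero]
  exact add_mem (G.lie_pos_neg_mem x₁ hx₁ y₂ hy₂) (G.lie_neg_pos_mem hx₂ hy₁)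

theorem lie_mem_sup_of_mem (G : IsShortGrading k mp mn) {x y : L} (hx : x ∈ mp ⊔ mn)
    (hy : y ∈ k) : ⁅x, y⁆ ∈ mp ⊔ mn := by
  obtain ⟨x₁, hx₁, x₂, hx₂, rfl⟩ := Submodule.mem_sup.mp hx
  rw [add_lie]
  exact Submodule.add_mem_sup (G.lie_pos_zero_mem hx₁ hy) (G.lie_neg_zero_mem hx₂ hy)

theorem ad_sq_apply_mem_sup (G : IsShortGrading k mp mn) {x y : L} (hx : x ∈ mp ⊔ mn)
    (hy : y ∈ mp ⊔ mn) : (ad R L x ^ 2) y ∈ mp ⊔ mn := by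
  rw [sq, Module.End.mul_apply, ad_apply, ad_apply]
  exact G.lie_mem_sup_of_mem hx (G.lie_mem_of_mem_sup hx hy)

end CommRing

section Field

variable {K L : Type*} [Field K] [LieRing L] [LieAlgebra K L] {k mp mn : Submodule K L}

theorem add_sq_mul_sub_sq_apply_comm_of_mem_pos (G : IsShortGrading k mp mn) (h3 : (3 : K) ≠ 0)
    {a b w : L} (ha : a ∈ mp) (hb : b ∈ mn) (hw : w ∈ mp) :
    ((ad K L a + ad K L b) ^ 2 * (ad K L a - ad K L b) ^ 2) w =
      ((ad K L a - ad K L b) ^ 2 * (ad K L a + ad K L b) ^ 2) w := by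
  have hbw : ⁅b, w⁆ ∈ k := G.lie_neg_pos_mem hb hw
  have haw : ad K L a w = 0 := G.lie_pos_pos_eq_zero a ha w hw
  have haab : (ad K L a ^ 2 * ad K L b) w = 0 :=
    G.lie_pos_pos_eq_zero a ha _ (G.lie_pos_zero_mem ha hbw)
  have hbbb : (ad K L b ^ 3) w = 0 :=
    G.lie_neg_neg_eq_zero b hb _ (G.lie_neg_zero_mem hb hbw)
  have hbbba : ⁅ad K L b, ⁅ad K L b, ⁅ad K L b, ad K L a⁆⁆⁆ = 0 := by
    rw [← LieHom.map_lie, ← LieHom.map_lie, ← LieHom.map_lie,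
      G.lie_neg_neg_eq_zero b hb _ (G.lie_neg_zero_mem hb (G.lie_neg_pos_mem hb ha)), map_zero]
  exact Module.End.add_sq_mul_sub_sq_apply_comm haw haab hbbb
    (Module.End.sq_mul_mul_apply_eq_of_lie_lie_lie_eq_zero h3 hbbba haw hbbb)

theorem ad_add_sq_mul_ad_sub_sq_apply_comm (G : IsShortGrading k mp mn) (h3 : (3 : K) ≠ 0)
    {a b w : L} (ha : a ∈ mp) (hb : b ∈ mn) (hw : w ∈ mp ⊔ mn) :
    (ad K L (a + b) ^ 2 * ad K L (a - b) ^ 2) w = (ad K L (a - b) ^ 2 * ad K L (a + b) ^ 2) w := by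
  obtain ⟨w₁, hw₁, w₂, hw₂, rfl⟩ := Submodule.mem_sup.mp hw
  have hneg := G.symm.add_sq_mul_sub_sq_apply_comm_of_mem_pos h3 hb ha hw₂
  rw [add_comm (ad K L b), ← neg_sub, neg_sq] at hneg
  rw [map_add, map_sub, map_add, map_add,
    G.add_sq_mul_sub_sq_apply_comm_of_mem_pos h3 ha hb hw₁, hneg]

end Field

end IsShortGrading

theorem statement3_general
    (L : Type*) [LieRing L] [LieAlgebra ℂ L]
    (k mp mn : Submodule ℂ L)
    (hkp : ∀ x ∈ k, ∀ y ∈ mp, ⁅x, y⁆ ∈ mp)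
    (hkn : ∀ x ∈ k, ∀ y ∈ mn, ⁅x, y⁆ ∈ mn)
    (hpp : ∀ x ∈ mp, ∀ y ∈ mp, ⁅x, y⁆ = 0)
    (hnn : ∀ x ∈ mn, ∀ y ∈ mn, ⁅x, y⁆ = 0)
    (hpn : ∀ x ∈ mp, ∀ y ∈ mn, ⁅x, y⁆ ∈ k)
    (J : L →ₗ[ℂ] L)
    (hJp : ∀ x ∈ mp, J x = Complex.I • x)
    (hJn : ∀ x ∈ mn, J x = -(Complex.I • x))
    (Z : L) (hZ : Z ∈ mp ⊔ mn) (j l : ℕ) :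
    ∀ W ∈ mp ⊔ mn,
      ((LieAlgebra.ad ℂ L (J Z)) ^ (2 * j)) (((LieAlgebra.ad ℂ L Z) ^ (2 * l)) W) =
        ((LieAlgebra.ad ℂ L Z) ^ (2 * l)) (((LieAlgebra.ad ℂ L (J Z)) ^ (2 * j)) W) := by
  intro W hW
  have G : IsShortGrading k mp mn := ⟨hkp, hkn, hpp, hnn, hpn⟩
  obtain ⟨a, ha, b, hb, rfl⟩ := Submodule.mem_sup.mp hZ
  have hJZ : ad ℂ L (J (a + b)) ^ 2 = -ad ℂ L (a - b) ^ 2 := by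
    rw [map_add, hJp a ha, hJn b hb, ← sub_eq_add_neg, ← smul_sub, map_smul, smul_pow,
      Complex.I_sq, neg_one_smul]
  have hab : a - b ∈ mp ⊔ mn := Submodule.sub_mem_sup ha hb
  rw [pow_mul, pow_mul, hJZ, ← Module.End.mul_apply, ← Module.End.mul_apply]
  refine Module.End.pow_mul_pow_apply_comm_of_forall_mem
    (fun _ hx ↦ neg_mem (G.ad_sq_apply_mem_sup hab hx)) (fun _ ↦ G.ad_sq_apply_mem_sup hZ)
    (fun x hx ↦ ?_) j l hW
  rw [neg_mul, mul_neg, LinearMap.neg_apply, LinearMap.neg_apply,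
    G.ad_add_sq_mul_ad_sub_sq_apply_comm three_ne_zero ha hb hx]

/-- For every Z ∈ m and all natural numbers j, l, the operators
ad_{JZ}^{2j} and ad_Z^{2l} commute as ℂ-linear endomorphisms of m. -/
theorem statement3
    (L : Type*) [LieRing L] [LieAlgebra ℂ L] [Module.Finite ℂ L]
    (k mp mn : Submodule ℂ L)
    (hsup : k ⊔ (mp ⊔ mn) = ⊤)
    (hd1 : Disjoint k (mp ⊔ mn))
    (hd2 : Disjoint mp mn)
    (hkk : ∀ x ∈ k, ∀ y ∈ k, ⁅x, y⁆ ∈ k)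
    (hkp : ∀ x ∈ k, ∀ y ∈ mp, ⁅x, y⁆ ∈ mp)
    (hkn : ∀ x ∈ k, ∀ y ∈ mn, ⁅x, y⁆ ∈ mn)
    (hpp : ∀ x ∈ mp, ∀ y ∈ mp, ⁅x, y⁆ = 0)
    (hnn : ∀ x ∈ mn, ∀ y ∈ mn, ⁅x, y⁆ = 0)
    (hpn : ∀ x ∈ mp, ∀ y ∈ mn, ⁅x, y⁆ ∈ k)
    (J : L →ₗ[ℂ] L)
    (hJp : ∀ x ∈ mp, J x = Complex.I • x)
    (hJn : ∀ x ∈ mn, J x = -(Complex.I • x))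
    (Z : L) (hZ : Z ∈ mp ⊔ mn) (j l : ℕ) :
    ∀ W ∈ mp ⊔ mn,
      ((LieAlgebra.ad ℂ L (J Z)) ^ (2 * j)) (((LieAlgebra.ad ℂ L Z) ^ (2 * l)) W) =
        ((LieAlgebra.ad ℂ L Z) ^ (2 * l)) (((LieAlgebra.ad ℂ L (J Z)) ^ (2 * j)) W) :=
  statement3_general L k mp mn hkp hkn hpp hnn hpn J hJp hJn Z hZ j l
end

section
/- For every Z ∈ m, exp(ad_Z)(Υ) = (Υ - F_Z(JZ)) - E_Z(JZ), where Υ - F_Z(JZ) lies in k and E_Z(JZ) lies in m; moreover Υ - F_Z(JZ) = ½(exp(ad_Z) + exp(ad_{-Z}))(Υ) and -E_Z(JZ) = ½(exp(ad_Z) - exp(ad_{-Z}))(Υ). In other words, the k-component of exp(ad_Z)(Υ) is Υ - F_Z(JZ) and its m-component is -E_Z(JZ). -/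
/-! Splitting the exponential series into its even and odd parts gives
`½ (exp ad_Z + exp (-ad_Z)) = 1 + F_Z ad_Z` and `½ (exp ad_Z - exp (-ad_Z)) = E_Z ad_Z`, which are
evaluated at `Υ` through `ad_Z Υ = -J Z`. Since `ad_Z` exchanges `k` and `m`, odd powers of `ad_Z`
send `J Z ∈ m` into `k` and even powers keep it in `m`. Finally `Υ ∈ k`: writing `Υ = u + v` with
`u ∈ k` and `v ∈ m`, one has `J v = ⁅Υ, v⁆ = ⁅u, v⁆ = -⁅Υ, u⁆ = 0`, and `J` is injective on `m`. -/

noncomputable section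

variable {L : Type*} [NormedAddCommGroup L] [NormedSpace ℂ L] [FiniteDimensional ℂ L]

/-- The adjoint operator ad_Z = ⁅Z, ·⁆, as a continuous ℂ-linear endomorphism of L, where the
Lie bracket of L is given by the ℂ-bilinear map bra. -/
def adC (bra : L →ₗ[ℂ] L →ₗ[ℂ] L) (Z : L) : L →L[ℂ] L :=
  LinearMap.toContinuousLinearMap (bra Z)

/-- exp T = Σ_{n ≥ 0} Tⁿ/n!, the exponential in the Banach algebra of continuous ℂ-linear
endomorphisms of L. -/
def expOp (T : L →L[ℂ] L) : L →L[ℂ] L :=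
  ∑' n : ℕ, ((n.factorial : ℂ)⁻¹) • T ^ n

/-- E_Z = Σ_{n ≥ 0} ad_Z^{2n}/(2n+1)!. -/
def Eop (bra : L →ₗ[ℂ] L →ₗ[ℂ] L) (Z : L) : L →L[ℂ] L :=
  ∑' n : ℕ, (((2 * n + 1).factorial : ℂ)⁻¹) • adC bra Z ^ (2 * n)

/-- F_Z = Σ_{n ≥ 1} ad_Z^{2n-1}/(2n)!. -/
def Fop (bra : L →ₗ[ℂ] L →ₗ[ℂ] L) (Z : L) : L →L[ℂ] L :=
  ∑' n : ℕ, (((2 * n + 2).factorial : ℂ)⁻¹) • adC bra Z ^ (2 * n + 1)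

/-- S_Z = Σ_{n ≥ 0} ad_Z^{2n}/(2n)!. -/
def Sop (bra : L →ₗ[ℂ] L →ₗ[ℂ] L) (Z : L) : L →L[ℂ] L :=
  ∑' n : ℕ, (((2 * n).factorial : ℂ)⁻¹) • adC bra Z ^ (2 * n)

open Set
open scoped Nat

section ExpSeries

variable {A : Type*} [NormedRing A] [NormedAlgebra ℂ A] [CompleteSpace A]

theorem summable_inv_smul_pow_of_factorial_le (a : A) {g c : ℕ → ℕ} (hg : g.Injective)
    (hc : ∀ n, (g n)! ≤ c n) : Summable fun n => (c n : ℂ)⁻¹ • a ^ g n := by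
  refine .of_norm_bounded ((NormedSpace.norm_expSeries_summable' (𝕂 := ℂ) a).comp_injective hg)
    fun n => ?_
  simp only [Function.comp, norm_smul, norm_inv, Complex.norm_natCast]
  gcongr
  exact_mod_cast hc n

theorem tsum_exp_eq_even_add_odd (a : A) :
    ∑' n, (n ! : ℂ)⁻¹ • a ^ n =
      ∑' n, ((2 * n)! : ℂ)⁻¹ • a ^ (2 * n) + ∑' n, ((2 * n + 1)! : ℂ)⁻¹ • a ^ (2 * n + 1) :=
  (tsum_even_add_odd (f := fun n => (n ! : ℂ)⁻¹ • a ^ n)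
    (summable_inv_smul_pow_of_factorial_le a (g := (2 * ·)) (mul_right_injective₀ two_ne_zero)
      fun _ => le_rfl)
    (summable_inv_smul_pow_of_factorial_le a (g := (2 * · + 1))
      ((add_left_injective 1).comp (mul_right_injective₀ two_ne_zero)) fun _ => le_rfl)).symm

theorem tsum_exp_even_eq_one_add_mul (a : A) :
    ∑' n, ((2 * n)! : ℂ)⁻¹ • a ^ (2 * n) =
      1 + (∑' n, ((2 * n + 2)! : ℂ)⁻¹ • a ^ (2 * n + 1)) * a := by
  rw [(summable_inv_smul_pow_of_factorial_le a (g := (2 * ·)) (mul_right_injective₀ two_ne_zero)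
      fun _ => le_rfl).tsum_eq_zero_add, ← Summable.tsum_mul_right]
  · simp [mul_add, pow_succ]
  · exact summable_inv_smul_pow_of_factorial_le a (g := (2 * · + 1))
      ((add_left_injective 1).comp (mul_right_injective₀ two_ne_zero))
      fun n => Nat.factorial_le (by omega)

theorem tsum_exp_odd_eq_mul (a : A) :
    ∑' n, ((2 * n + 1)! : ℂ)⁻¹ • a ^ (2 * n + 1) =
      (∑' n, ((2 * n + 1)! : ℂ)⁻¹ • a ^ (2 * n)) * a := by
  rw [← Summable.tsum_mul_right]
  · simp [pow_succ]
  · exact summable_inv_smul_pow_of_factorial_le a (g := (2 * ·)) (mul_right_injective₀ two_ne_zero)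
      fun n => Nat.factorial_le (by omega)

theorem half_smul_tsum_exp_add_tsum_exp_neg (a : A) :
    (2 : ℂ)⁻¹ • (∑' n, (n ! : ℂ)⁻¹ • a ^ n + ∑' n, (n ! : ℂ)⁻¹ • (-a) ^ n) =
      1 + (∑' n, ((2 * n + 2)! : ℂ)⁻¹ • a ^ (2 * n + 1)) * a := by
  rw [tsum_exp_eq_even_add_odd, tsum_exp_eq_even_add_odd (-a)]
  simp only [Even.neg_pow, even_two_mul, Odd.neg_pow, odd_two_mul_add_one, smul_neg, tsum_neg]
  rw [← tsum_exp_even_eq_one_add_mul]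
  module

theorem half_smul_tsum_exp_sub_tsum_exp_neg (a : A) :
    (2 : ℂ)⁻¹ • (∑' n, (n ! : ℂ)⁻¹ • a ^ n - ∑' n, (n ! : ℂ)⁻¹ • (-a) ^ n) =
      (∑' n, ((2 * n + 1)! : ℂ)⁻¹ • a ^ (2 * n)) * a := by
  rw [tsum_exp_eq_even_add_odd, tsum_exp_eq_even_add_odd (-a)]
  simp only [Even.neg_pow, even_two_mul, Odd.neg_pow, odd_two_mul_add_one, smul_neg, tsum_neg]
  rw [← tsum_exp_odd_eq_mul]
  module

end ExpSeries

theorem Set.MapsTo.iterate_two_mul {α : Type*} {f : α → α} {s t : Set α} (hst : MapsTo f s t)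
    (hts : MapsTo f t s) (n : ℕ) : MapsTo f^[2 * n] s s := by
  rw [Function.iterate_mul]
  exact (hts.comp hst).iterate n

theorem Set.MapsTo.iterate_two_mul_add_one {α : Type*} {f : α → α} {s t : Set α}
    (hst : MapsTo f s t) (hts : MapsTo f t s) (n : ℕ) : MapsTo f^[2 * n + 1] s t := by
  rw [Function.iterate_succ']
  exact hst.comp (hst.iterate_two_mul hts n)

theorem ContinuousLinearMap.tsum_apply_mem {𝕜 M : Type*} [NontriviallyNormedField 𝕜]
    [NormedAddCommGroup M] [NormedSpace 𝕜 M] {p : Submodule 𝕜 M} (hp : IsClosed (p : Set M))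
    {f : ℕ → M →L[𝕜] M} {v : M} (h : ∀ n, f n v ∈ p) : (∑' n, f n) v ∈ p :=
  tsum_mem (s := p.comap (apply 𝕜 M v : (M →L[𝕜] M) →ₗ[𝕜] M))
    (hp.preimage (apply 𝕜 M v).continuous) h

section AdjointSeries

theorem adC_neg (bra : L →ₗ[ℂ] L →ₗ[ℂ] L) (Z : L) : adC bra (-Z) = -adC bra Z := by
  ext
  simp [adC]

theorem half_smul_expOp_add_expOp_neg (bra : L →ₗ[ℂ] L →ₗ[ℂ] L) (Z u : L) :
    (2 : ℂ)⁻¹ • (expOp (adC bra Z) u + expOp (adC bra (-Z)) u) = u + Fop bra Z (bra Z u) := by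
  rw [← add_apply, ← smul_apply, adC_neg, expOp, expOp, half_smul_tsum_exp_add_tsum_exp_neg]
  rfl

theorem half_smul_expOp_sub_expOp_neg (bra : L →ₗ[ℂ] L →ₗ[ℂ] L) (Z u : L) :
    (2 : ℂ)⁻¹ • (expOp (adC bra Z) u - expOp (adC bra (-Z)) u) = Eop bra Z (bra Z u) := by
  rw [← sub_apply, ← smul_apply, adC_neg, expOp, expOp, half_smul_tsum_exp_sub_tsum_exp_neg]
  rfl

variable {bra : L →ₗ[ℂ] L →ₗ[ℂ] L} {Z x : L} {p q : Submodule ℂ L}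

theorem Fop_apply_mem (hpq : MapsTo (adC bra Z) p q) (hqp : MapsTo (adC bra Z) q p) (hx : x ∈ p) :
    Fop bra Z x ∈ q :=
  ContinuousLinearMap.tsum_apply_mem q.closed_of_finiteDimensional fun n => q.smul_mem _ <|
    FunLike.coe_pow_eq_iterate (adC bra Z) _ ▸ hpq.iterate_two_mul_add_one hqp n hx

theorem Eop_apply_mem (hpq : MapsTo (adC bra Z) p q) (hqp : MapsTo (adC bra Z) q p) (hx : x ∈ p) :
    Eop bra Z x ∈ p :=
  ContinuousLinearMap.tsum_apply_mem p.closed_of_finiteDimensional fun n => p.smul_mem _ <|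
    FunLike.coe_pow_eq_iterate (adC bra Z) _ ▸ hpq.iterate_two_mul hqp n hx

end AdjointSeries

section GradedBracket

variable {R M : Type*} [CommRing R] [AddCommGroup M] [Module R M] {bra : M →ₗ[R] M →ₗ[R] M}
  {k m mp mn : Submodule R M} {x y : M}

theorem bracket_mem_of_mem_sup_of_mem_sup (hbra : bra.IsAlt)
    (hpp : ∀ x ∈ mp, ∀ y ∈ mp, bra x y = 0) (hnn : ∀ x ∈ mn, ∀ y ∈ mn, bra x y = 0)
    (hpn : ∀ x ∈ mp, ∀ y ∈ mn, bra x y ∈ k) (hx : x ∈ mp ⊔ mn) (hy : y ∈ mp ⊔ mn) :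
    bra x y ∈ k := by
  obtain ⟨a, ha, b, hb, rfl⟩ := Submodule.mem_sup.mp hx
  obtain ⟨c, hc, d, hd, rfl⟩ := Submodule.mem_sup.mp hy
  have hbc : bra b c ∈ k := by
    rw [← hbra.neg]
    exact neg_mem (hpn c hc b hb)
  simpa [hpp a ha c hc, hnn b hb d hd] using add_mem (hpn a ha d hd) hbc

theorem bracket_mem_sup_of_mem_sup_of_mem (hbra : bra.IsAlt)
    (hkp : ∀ x ∈ k, ∀ y ∈ mp, bra x y ∈ mp) (hkn : ∀ x ∈ k, ∀ y ∈ mn, bra x y ∈ mn)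
    (hx : x ∈ mp ⊔ mn) (hy : y ∈ k) : bra x y ∈ mp ⊔ mn := by
  obtain ⟨c, hc, d, hd, rfl⟩ := Submodule.mem_sup.mp hx
  rw [← hbra.neg, map_add, neg_add]
  exact add_mem (Submodule.mem_sup_left (neg_mem (hkp y hy c hc)))
    (Submodule.mem_sup_right (neg_mem (hkn y hy d hd)))

theorem mem_of_bracket_eq_zero_of_injOn {Υ : M} (hbra : bra.IsAlt) (hsup : k ⊔ m = ⊤)
    (hk : ∀ X ∈ k, bra Υ X = 0) (hm : ∀ v ∈ m, bra Υ v = 0 → v = 0) : Υ ∈ k := by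
  obtain ⟨u, hu, v, hv, rfl⟩ := Submodule.mem_sup.mp (hsup ▸ Submodule.mem_top (x := Υ))
  have hvu : bra v u = 0 := by simpa [hbra u] using hk u hu
  have huv : bra (u + v) v = 0 := by simp [hbra v, ← hbra.neg v u, hvu]
  rw [hm v hv huv, add_zero]
  exact hu

end GradedBracket

section ComplexStructure

variable {M : Type*} [AddCommGroup M] [Module ℂ M] {mp mn : Submodule ℂ M} {J : M →ₗ[ℂ] M} {x : M}

theorem map_mem_sup_of_eq_I_smul (hJp : ∀ x ∈ mp, J x = Complex.I • x)
    (hJn : ∀ x ∈ mn, J x = -(Complex.I • x)) (hx : x ∈ mp ⊔ mn) : J x ∈ mp ⊔ mn := by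
  obtain ⟨a, ha, b, hb, rfl⟩ := Submodule.mem_sup.mp hx
  rw [map_add, hJp a ha, hJn b hb]
  exact add_mem (Submodule.mem_sup_left (mp.smul_mem _ ha))
    (Submodule.mem_sup_right (neg_mem (mn.smul_mem _ hb)))

theorem eq_zero_of_map_eq_zero_of_eq_I_smul (hd : Disjoint mp mn)
    (hJp : ∀ x ∈ mp, J x = Complex.I • x) (hJn : ∀ x ∈ mn, J x = -(Complex.I • x))
    (hx : x ∈ mp ⊔ mn) (hJx : J x = 0) : x = 0 := by
  obtain ⟨a, ha, b, hb, rfl⟩ := Submodule.mem_sup.mp hx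
  rw [map_add, hJp a ha, hJn b hb, add_neg_eq_zero] at hJx
  obtain rfl : a = b := smul_right_injective M Complex.I_ne_zero hJx
  rw [Submodule.disjoint_def.mp hd a ha hb, add_zero]

end ComplexStructure

theorem statement4_general {L : Type*} [NormedAddCommGroup L] [NormedSpace ℂ L] [FiniteDimensional ℂ L]
    (bra : L →ₗ[ℂ] L →ₗ[ℂ] L)
    (halt : ∀ x : L, bra x x = 0)
    (k mp mn : Submodule ℂ L)
    (hsup : k ⊔ (mp ⊔ mn) = ⊤)
    (hd2 : Disjoint mp mn)
    (hkp : ∀ x ∈ k, ∀ y ∈ mp, bra x y ∈ mp)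
    (hkn : ∀ x ∈ k, ∀ y ∈ mn, bra x y ∈ mn)
    (hpp : ∀ x ∈ mp, ∀ y ∈ mp, bra x y = 0)
    (hnn : ∀ x ∈ mn, ∀ y ∈ mn, bra x y = 0)
    (hpn : ∀ x ∈ mp, ∀ y ∈ mn, bra x y ∈ k)
    (J : L →ₗ[ℂ] L)
    (hJp : ∀ x ∈ mp, J x = Complex.I • x)
    (hJn : ∀ x ∈ mn, J x = -(Complex.I • x))
    (Υ : L)
    (hUk : ∀ X ∈ k, bra Υ X = 0)
    (hUm : ∀ W ∈ mp ⊔ mn, bra Υ W = J W)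
    (Z : L) (hZ : Z ∈ mp ⊔ mn) :
    expOp (adC bra Z) Υ = (Υ - Fop bra Z (J Z)) - Eop bra Z (J Z) ∧
    Υ - Fop bra Z (J Z) ∈ k ∧
    Eop bra Z (J Z) ∈ mp ⊔ mn ∧
    Υ - Fop bra Z (J Z) = (2 : ℂ)⁻¹ • (expOp (adC bra Z) Υ + expOp (adC bra (-Z)) Υ) ∧
    -(Eop bra Z (J Z)) = (2 : ℂ)⁻¹ • (expOp (adC bra Z) Υ - expOp (adC bra (-Z)) Υ) := by
  have hZΥ : bra Z Υ = -J Z := by rw [← LinearMap.IsAlt.neg halt, hUm Z hZ]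
  have hΥ : Υ ∈ k := mem_of_bracket_eq_zero_of_injOn halt hsup hUk fun v hv h =>
    eq_zero_of_map_eq_zero_of_eq_I_smul hd2 hJp hJn hv (hUm v hv ▸ h)
  have hJZ : J Z ∈ mp ⊔ mn := map_mem_sup_of_eq_I_smul hJp hJn hZ
  have hZm : MapsTo (adC bra Z) ↑(mp ⊔ mn) k := fun _ =>
    bracket_mem_of_mem_sup_of_mem_sup halt hpp hnn hpn hZ
  have hZk : MapsTo (adC bra Z) k ↑(mp ⊔ mn) := fun _ =>
    bracket_mem_sup_of_mem_sup_of_mem halt hkp hkn hZ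
  have hk : Υ - Fop bra Z (J Z) = (2 : ℂ)⁻¹ • (expOp (adC bra Z) Υ + expOp (adC bra (-Z)) Υ) := by
    rw [half_smul_expOp_add_expOp_neg, hZΥ, map_neg, sub_eq_add_neg]
  have hm : -Eop bra Z (J Z) = (2 : ℂ)⁻¹ • (expOp (adC bra Z) Υ - expOp (adC bra (-Z)) Υ) := by
    rw [half_smul_expOp_sub_expOp_neg, hZΥ, map_neg]
  refine ⟨?_, sub_mem hΥ (Fop_apply_mem hZm hZk hJZ), Eop_apply_mem hZm hZk hJZ, hk, hm⟩
  rw [sub_eq_add_neg _ (Eop bra Z (J Z)), hk, hm]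
  module

/-- exp(ad_Z)(Υ) = (Υ - F_Z(JZ)) - E_Z(JZ), where Υ - F_Z(JZ) ∈ k and E_Z(JZ) ∈ m; moreover Υ - F_Z(JZ) = ½(exp(ad_Z)+exp(ad_{-Z}))(Υ) and -E_Z(JZ) = ½(exp(ad_Z)-exp(ad_{-Z}))(Υ). -/
theorem statement4 {L : Type*} [NormedAddCommGroup L] [NormedSpace ℂ L] [FiniteDimensional ℂ L]
    (bra : L →ₗ[ℂ] L →ₗ[ℂ] L)
    (halt : ∀ x : L, bra x x = 0)
    (hjac : ∀ x y z : L, bra x (bra y z) = bra (bra x y) z + bra y (bra x z))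
    (k mp mn : Submodule ℂ L)
    (hsup : k ⊔ (mp ⊔ mn) = ⊤)
    (hd1 : Disjoint k (mp ⊔ mn))
    (hd2 : Disjoint mp mn)
    (hkk : ∀ x ∈ k, ∀ y ∈ k, bra x y ∈ k)
    (hkp : ∀ x ∈ k, ∀ y ∈ mp, bra x y ∈ mp)
    (hkn : ∀ x ∈ k, ∀ y ∈ mn, bra x y ∈ mn)
    (hpp : ∀ x ∈ mp, ∀ y ∈ mp, bra x y = 0)
    (hnn : ∀ x ∈ mn, ∀ y ∈ mn, bra x y = 0)
    (hpn : ∀ x ∈ mp, ∀ y ∈ mn, bra x y ∈ k)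
    (J : L →ₗ[ℂ] L)
    (hJp : ∀ x ∈ mp, J x = Complex.I • x)
    (hJn : ∀ x ∈ mn, J x = -(Complex.I • x))
    (Υ : L)
    (hUk : ∀ X ∈ k, bra Υ X = 0)
    (hUm : ∀ W ∈ mp ⊔ mn, bra Υ W = J W)
    (Z : L) (hZ : Z ∈ mp ⊔ mn) :
    expOp (adC bra Z) Υ = (Υ - Fop bra Z (J Z)) - Eop bra Z (J Z) ∧
    Υ - Fop bra Z (J Z) ∈ k ∧
    Eop bra Z (J Z) ∈ mp ⊔ mn ∧
    Υ - Fop bra Z (J Z) = (2 : ℂ)⁻¹ • (expOp (adC bra Z) Υ + expOp (adC bra (-Z)) Υ) ∧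
    -(Eop bra Z (J Z)) = (2 : ℂ)⁻¹ • (expOp (adC bra Z) Υ - expOp (adC bra (-Z)) Υ) :=
  statement4_general bra halt k mp mn hsup hd2 hkp hkn hpp hnn hpn J hJp hJn Υ hUk hUm Z hZ
end
end

section
/- For every Z ∈ m, J ∘ S_{JZ} ∘ S_Z = S_{JZ} ∘ S_Z ∘ J as ℂ-linear maps from m to m. -/
/-!
Write `Z = a + b` with `a ∈ m⁺`, `b ∈ m⁻`, so that `JZ = i (a - b)`. Since `S_Z` only involves
even powers of `ad_Z`, it is `cosh √X` evaluated at `X = ad_{a+b}²`, and `S_{JZ}` is `cosh √Y`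
at `Y = ad_{JZ}² = -ad_{a-b}²`. On `m`, `J` intertwines `X` with `Y` and `Y` with `X`. The grading
gives `ad_a³ = ad_b³ = 0` and `ad_a ad_{[a,b]} ad_a = ad_b ad_{[b,a]} ad_b = 0`, and these
identities make `ad_{a+b}²` and `ad_{a-b}²` commute. Hence on `m`
`J S_{JZ} S_Z = S_Z J S_Z = S_Z S_{JZ} J = S_{JZ} S_Z J`.
-/

noncomputable section

variable {L : Type*} [NormedAddCommGroup L] [NormedSpace ℂ L] [FiniteDimensional ℂ L]

lemma commute_add_sq_sub_sq {R : Type*} [Ring R] {P Q : R} (hP : P ^ 3 = 0) (hQ : Q ^ 3 = 0)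
    (hPQ : P * (P * Q - Q * P) * P = 0) (hQP : Q * (Q * P - P * Q) * Q = 0) :
    Commute ((P + Q) ^ 2) ((P - Q) ^ 2) := by
  have key : (P + Q) ^ 2 * (P - Q) ^ 2 - (P - Q) ^ 2 * (P + Q) ^ 2 =
      2 * (Q * P ^ 3 - P ^ 3 * Q + P * Q ^ 3 - Q ^ 3 * P
        - P * (P * Q - Q * P) * P - Q * (Q * P - P * Q) * Q) := by
    noncomm_ring
  rw [hP, hQ, hPQ, hQP] at key
  exact sub_eq_zero.mp (by simpa using key)

section GradedBracket

variable {K M : Type*} [Field K] [AddCommGroup M] [Module K M]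

structure IsGradedBracket (bra : M →ₗ[K] M →ₗ[K] M) (k mp mn : Submodule K M) : Prop where
  bracket_self : ∀ x, bra x x = 0
  zero_pos_mem : ∀ x ∈ k, ∀ y ∈ mp, bra x y ∈ mp
  zero_neg_mem : ∀ x ∈ k, ∀ y ∈ mn, bra x y ∈ mn
  pos_pos_eq_zero : ∀ x ∈ mp, ∀ y ∈ mp, bra x y = 0
  neg_neg_eq_zero : ∀ x ∈ mn, ∀ y ∈ mn, bra x y = 0
  pos_neg_mem : ∀ x ∈ mp, ∀ y ∈ mn, bra x y ∈ k

lemma bra_bra_eq_mul_sub_mul {bra : M →ₗ[K] M →ₗ[K] M}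
    (hjac : ∀ x y z, bra x (bra y z) = bra (bra x y) z + bra y (bra x z)) (x y : M) :
    bra (bra x y) = bra x * bra y - bra y * bra x := by
  ext z
  simp [hjac x y z]

lemma LinearMap.eq_zero_of_sup_sup_eq_top {N : Type*} [AddCommGroup N] [Module K N]
    {k mp mn : Submodule K M} (hsup : k ⊔ (mp ⊔ mn) = ⊤) {f : M →ₗ[K] N}
    (hk : ∀ x ∈ k, f x = 0) (hp : ∀ x ∈ mp, f x = 0) (hn : ∀ x ∈ mn, f x = 0) : f = 0 := by
  rw [← LinearMap.ker_eq_top, eq_top_iff, ← hsup]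
  exact sup_le hk (sup_le hp hn)

namespace IsGradedBracket

variable {bra : M →ₗ[K] M →ₗ[K] M} {k mp mn : Submodule K M}

lemma swap (h : IsGradedBracket bra k mp mn) (x y : M) : bra x y = -bra y x := by
  have hxy := h.bracket_self (x + y)
  simp only [map_add, LinearMap.add_apply, h.bracket_self, zero_add, add_zero] at hxy
  exact eq_neg_of_add_eq_zero_right hxy

lemma pos_zero_mem (h : IsGradedBracket bra k mp mn) {x y : M} (hx : x ∈ mp) (hy : y ∈ k) :
    bra x y ∈ mp := by
  rw [h.swap]
  exact neg_mem (h.zero_pos_mem y hy x hx)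

lemma neg_pos_mem (h : IsGradedBracket bra k mp mn) {x y : M} (hx : x ∈ mn) (hy : y ∈ mp) :
    bra x y ∈ k := by
  rw [h.swap]
  exact neg_mem (h.pos_neg_mem y hy x hx)

lemma symm (h : IsGradedBracket bra k mp mn) : IsGradedBracket bra k mn mp :=
  ⟨h.bracket_self, h.zero_neg_mem, h.zero_pos_mem, h.neg_neg_eq_zero, h.pos_pos_eq_zero,
    fun _ hx _ hy => h.neg_pos_mem hx hy⟩

lemma pow_three_eq_zero (h : IsGradedBracket bra k mp mn) (hsup : k ⊔ (mp ⊔ mn) = ⊤)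
    {a : M} (ha : a ∈ mp) : bra a ^ 3 = 0 := by
  have h2 : ∀ u ∈ k, bra a (bra a u) = 0 := fun u hu =>
    h.pos_pos_eq_zero a ha _ (h.pos_zero_mem ha hu)
  refine LinearMap.eq_zero_of_sup_sup_eq_top hsup (fun u hu => ?_) (fun u hu => ?_) (fun u hu => ?_)
  all_goals simp only [pow_succ, pow_zero, one_mul, Module.End.mul_apply]
  · rw [h2 u hu, map_zero]
  · rw [h.pos_pos_eq_zero a ha u hu, map_zero, map_zero]
  · exact h2 _ (h.pos_neg_mem a ha u hu)

/-- Since `[y, z] = 0`, expanding `ad_a³ [y, z]` by the Leibniz rule gives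
`3 ad_a [ad_a y, ad_a z] = 0`. -/
lemma bra_bra_bra_eq_zero [CharZero K] (h : IsGradedBracket bra k mp mn)
    (hjac : ∀ x y z, bra x (bra y z) = bra (bra x y) z + bra y (bra x z))
    {a y z : M} (ha : a ∈ mp) (hy : y ∈ mn) (hz : z ∈ mn) :
    bra a (bra (bra a y) (bra a z)) = 0 := by
  have h3 : ∀ u ∈ mn, bra a (bra a (bra a u)) = 0 := fun u hu =>
    h.pos_pos_eq_zero a ha _ (h.pos_zero_mem ha (h.pos_neg_mem a ha u hu))
  have e1 := congrArg (fun t => bra a (bra a t)) (hjac a y z)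
  have e2 := congrArg (bra a) (hjac a (bra a y) z)
  have e3 := congrArg (bra a) (hjac a y (bra a z))
  have e4 := hjac a (bra a (bra a y)) z
  have e5 := hjac a (bra a y) (bra a z)
  have e6 := hjac a y (bra a (bra a z))
  rw [h.neg_neg_eq_zero y hy z hz, map_zero] at e1
  rw [h3 y hy, map_zero, LinearMap.zero_apply, zero_add] at e4
  rw [h3 z hz, map_zero, add_zero] at e6
  simp only [map_add, map_zero] at e1 e2 e3
  have key : (3 : K) • bra a (bra (bra a y) (bra a z)) = 0 := by
    linear_combination (norm := module) -e1 - e2 - e3 - e4 + e5 - e6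
  exact (smul_eq_zero.mp key).resolve_left three_ne_zero

lemma mul_bra_bra_mul_eq_zero [CharZero K] (h : IsGradedBracket bra k mp mn)
    (hjac : ∀ x y z, bra x (bra y z) = bra (bra x y) z + bra y (bra x z))
    (hsup : k ⊔ (mp ⊔ mn) = ⊤) {a b : M} (ha : a ∈ mp) (hb : b ∈ mn) :
    bra a * bra (bra a b) * bra a = 0 := by
  refine LinearMap.eq_zero_of_sup_sup_eq_top hsup (fun u hu => ?_) (fun u hu => ?_) (fun u hu => ?_)
  all_goals simp only [Module.End.mul_apply]
  · exact h.pos_pos_eq_zero a ha _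
      (h.zero_pos_mem _ (h.pos_neg_mem a ha b hb) _ (h.pos_zero_mem ha hu))
  · rw [h.pos_pos_eq_zero a ha u hu, map_zero, map_zero]
  · exact h.bra_bra_bra_eq_zero hjac ha hb hu

lemma commute_bra_add_sq_bra_sub_sq [CharZero K] (h : IsGradedBracket bra k mp mn)
    (hjac : ∀ x y z, bra x (bra y z) = bra (bra x y) z + bra y (bra x z))
    (hsup : k ⊔ (mp ⊔ mn) = ⊤) {a b : M} (ha : a ∈ mp) (hb : b ∈ mn) :
    Commute (bra (a + b) ^ 2) (bra (a - b) ^ 2) := by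
  have hsup' : k ⊔ (mn ⊔ mp) = ⊤ := sup_comm mp mn ▸ hsup
  rw [map_add, map_sub]
  refine commute_add_sq_sub_sq (h.pow_three_eq_zero hsup ha) (h.symm.pow_three_eq_zero hsup' hb)
    ?_ ?_ <;> rw [← bra_bra_eq_mul_sub_mul hjac]
  · exact h.mul_bra_bra_mul_eq_zero hjac hsup ha hb
  · exact h.symm.mul_bra_bra_mul_eq_zero hjac hsup' hb ha

lemma bra_add_mem_zero (h : IsGradedBracket bra k mp mn) {a b w : M} (ha : a ∈ mp)
    (hb : b ∈ mn) (hw : w ∈ mp ⊔ mn) : bra (a + b) w ∈ k := by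
  obtain ⟨wp, hwp, wn, hwn, rfl⟩ := Submodule.mem_sup.mp hw
  simp only [map_add, LinearMap.add_apply, h.pos_pos_eq_zero a ha wp hwp,
    h.neg_neg_eq_zero b hb wn hwn, zero_add, add_zero]
  exact add_mem (h.neg_pos_mem hb hwp) (h.pos_neg_mem a ha wn hwn)

lemma bra_add_mem_sup (h : IsGradedBracket bra k mp mn) {a b u : M} (ha : a ∈ mp)
    (hb : b ∈ mn) (hu : u ∈ k) : bra (a + b) u ∈ mp ⊔ mn := by
  rw [map_add, LinearMap.add_apply]
  exact add_mem (Submodule.mem_sup_left (h.pos_zero_mem ha hu))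
    (Submodule.mem_sup_right (h.symm.pos_zero_mem hb hu))

lemma bra_add_bra_add_mem_sup (h : IsGradedBracket bra k mp mn) {a b w : M} (ha : a ∈ mp)
    (hb : b ∈ mn) (hw : w ∈ mp ⊔ mn) : bra (a + b) (bra (a + b) w) ∈ mp ⊔ mn :=
  h.bra_add_mem_sup ha hb (h.bra_add_mem_zero ha hb hw)

section Twist

variable {J : M →ₗ[K] M} {c : K}

lemma map_bra_add_of_mem_zero (h : IsGradedBracket bra k mp mn)
    (hJp : ∀ x ∈ mp, J x = c • x) (hJn : ∀ x ∈ mn, J x = -(c • x)) {a b u : M}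
    (ha : a ∈ mp) (hb : b ∈ mn) (hu : u ∈ k) : J (bra (a + b) u) = c • bra (a - b) u := by
  rw [map_add, LinearMap.add_apply, map_add, hJp _ (h.pos_zero_mem ha hu),
    hJn _ (h.symm.pos_zero_mem hb hu), map_sub, LinearMap.sub_apply, smul_sub, sub_eq_add_neg]

lemma bra_sub_map (h : IsGradedBracket bra k mp mn)
    (hJp : ∀ x ∈ mp, J x = c • x) (hJn : ∀ x ∈ mn, J x = -(c • x)) {a b w : M}
    (ha : a ∈ mp) (hb : b ∈ mn) (hw : w ∈ mp ⊔ mn) :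
    bra (a - b) (J w) = -(c • bra (a + b) w) := by
  obtain ⟨wp, hwp, wn, hwn, rfl⟩ := Submodule.mem_sup.mp hw
  rw [map_add, hJp wp hwp, hJn wn hwn]
  simp only [map_add, map_sub, map_neg, map_smul, LinearMap.add_apply, LinearMap.sub_apply,
    h.pos_pos_eq_zero a ha wp hwp, h.neg_neg_eq_zero b hb wn hwn]
  module

lemma map_bra_add_bra_add (h : IsGradedBracket bra k mp mn)
    (hJp : ∀ x ∈ mp, J x = c • x) (hJn : ∀ x ∈ mn, J x = -(c • x)) {a b w : M}
    (ha : a ∈ mp) (hb : b ∈ mn) (hw : w ∈ mp ⊔ mn) :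
    J (bra (a + b) (bra (a + b) w)) = -bra (a - b) (bra (a - b) (J w)) := by
  rw [h.map_bra_add_of_mem_zero hJp hJn ha hb (h.bra_add_mem_zero ha hb hw),
    h.bra_sub_map hJp hJn ha hb hw]
  simp only [map_neg, map_smul, neg_neg]

end Twist

end IsGradedBracket

end GradedBracket

section CoshSqrt

variable {𝔸 : Type*} [NormedRing 𝔸] [NormedAlgebra ℂ 𝔸]

def coshSqrt (X : 𝔸) : 𝔸 :=
  ∑' n : ℕ, ((2 * n).factorial : ℂ)⁻¹ • X ^ n

lemma summable_coshSqrt [CompleteSpace 𝔸] (X : 𝔸) :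
    Summable fun n : ℕ => ((2 * n).factorial : ℂ)⁻¹ • X ^ n := by
  refine .of_norm_bounded (NormedSpace.norm_expSeries_summable' (𝕂 := ℂ) X) fun n => ?_
  rw [norm_smul, norm_smul, norm_inv, norm_inv, Complex.norm_natCast, Complex.norm_natCast]
  gcongr
  omega

lemma Commute.coshSqrt {X Y : 𝔸} (h : Commute X Y) : Commute (coshSqrt X) (coshSqrt Y) :=
  .tsum_left _ fun n => .tsum_right _ fun m => ((h.pow_pow n m).smul_left _).smul_right _

end CoshSqrt

section Intertwining

variable {E : Type*} [NormedAddCommGroup E] [NormedSpace ℂ E]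
  {X Y : E →L[ℂ] E} {V : Submodule ℂ E} {J : E →ₗ[ℂ] E}

lemma pow_apply_mem (hX : ∀ v ∈ V, X v ∈ V) (n : ℕ) {v : E} (hv : v ∈ V) :
    (X ^ n) v ∈ V := by
  induction n with
  | zero => simpa using hv
  | succ n ih => rw [pow_succ', mul_apply_eq_comp]; exact hX _ ih

lemma map_pow_apply (hX : ∀ v ∈ V, X v ∈ V) (hJ : ∀ v ∈ V, J (X v) = Y (J v)) (n : ℕ)
    {v : E} (hv : v ∈ V) : J ((X ^ n) v) = (Y ^ n) (J v) := by
  induction n with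
  | zero => rfl
  | succ n ih =>
    rw [pow_succ', pow_succ', mul_apply_eq_comp, mul_apply_eq_comp,
      hJ _ (pow_apply_mem hX n hv), ih]

variable [FiniteDimensional ℂ E]

lemma hasSum_coshSqrt_apply (X : E →L[ℂ] E) (v : E) :
    HasSum (fun n : ℕ => ((2 * n).factorial : ℂ)⁻¹ • (X ^ n) v) (coshSqrt X v) :=
  (summable_coshSqrt X).hasSum.mapL (ContinuousLinearMap.apply ℂ E v)

lemma coshSqrt_apply_mem (hX : ∀ v ∈ V, X v ∈ V) {v : E} (hv : v ∈ V) :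
    coshSqrt X v ∈ V :=
  V.closed_of_finiteDimensional.mem_of_tendsto (hasSum_coshSqrt_apply X v)
    (.of_forall fun _ => sum_mem fun n _ => V.smul_mem _ (pow_apply_mem hX n hv))

lemma map_coshSqrt_apply (hX : ∀ v ∈ V, X v ∈ V) (hJ : ∀ v ∈ V, J (X v) = Y (J v))
    {v : E} (hv : v ∈ V) : J (coshSqrt X v) = coshSqrt Y (J v) := by
  refine ((hasSum_coshSqrt_apply X v).mapL (LinearMap.toContinuousLinearMap J)).unique ?_
  convert hasSum_coshSqrt_apply Y (J v) using 2 with n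
  simp only [LinearMap.coe_toContinuousLinearMap', map_smul, map_pow_apply hX hJ n hv]

lemma map_coshSqrt_coshSqrt_apply (hX : ∀ v ∈ V, X v ∈ V) (hY : ∀ v ∈ V, Y v ∈ V)
    (hXY : ∀ v ∈ V, J (X v) = Y (J v)) (hYX : ∀ v ∈ V, J (Y v) = X (J v))
    (hcomm : Commute X Y) {v : E} (hv : v ∈ V) :
    J (coshSqrt Y (coshSqrt X v)) = coshSqrt Y (coshSqrt X (J v)) := by
  rw [map_coshSqrt_apply hY hYX (coshSqrt_apply_mem hX hv), map_coshSqrt_apply hX hXY hv,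
    ← mul_apply_eq_comp, ← mul_apply_eq_comp, hcomm.coshSqrt.eq]

end Intertwining

section Adjoint

variable (bra : L →ₗ[ℂ] L →ₗ[ℂ] L)

lemma Sop_eq_coshSqrt (Z : L) : Sop bra Z = coshSqrt (adC bra Z ^ 2) := by
  simp only [Sop, coshSqrt, pow_mul]

lemma adC_sq_apply (x w : L) : (adC bra x ^ 2) w = bra x (bra x w) := by
  rw [sq]
  rfl

lemma adC_I_smul_sq (x : L) : adC bra (Complex.I • x) ^ 2 = -(adC bra x ^ 2) := by
  have hsmul : adC bra (Complex.I • x) = Complex.I • adC bra x := by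
    ext w
    simp [adC]
  rw [hsmul, smul_pow, Complex.I_sq, neg_one_smul]

lemma commute_adC_sq {x y : L} (h : Commute (bra x ^ 2) (bra y ^ 2)) :
    Commute (adC bra x ^ 2) (adC bra y ^ 2) := by
  have hmap := h.map (Module.End.toContinuousLinearMap L)
  rw [map_pow, map_pow] at hmap
  exact hmap

end Adjoint

theorem statement6_general {L : Type*} [NormedAddCommGroup L] [NormedSpace ℂ L] [FiniteDimensional ℂ L]
    (bra : L →ₗ[ℂ] L →ₗ[ℂ] L)
    (halt : ∀ x : L, bra x x = 0)
    (hjac : ∀ x y z : L, bra x (bra y z) = bra (bra x y) z + bra y (bra x z))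
    (k mp mn : Submodule ℂ L)
    (hsup : k ⊔ (mp ⊔ mn) = ⊤)
    (hkp : ∀ x ∈ k, ∀ y ∈ mp, bra x y ∈ mp)
    (hkn : ∀ x ∈ k, ∀ y ∈ mn, bra x y ∈ mn)
    (hpp : ∀ x ∈ mp, ∀ y ∈ mp, bra x y = 0)
    (hnn : ∀ x ∈ mn, ∀ y ∈ mn, bra x y = 0)
    (hpn : ∀ x ∈ mp, ∀ y ∈ mn, bra x y ∈ k)
    (J : L →ₗ[ℂ] L)
    (hJp : ∀ x ∈ mp, J x = Complex.I • x)
    (hJn : ∀ x ∈ mn, J x = -(Complex.I • x))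
    (Z : L) (hZ : Z ∈ mp ⊔ mn) :
    ∀ W ∈ mp ⊔ mn,
      J (Sop bra (J Z) (Sop bra Z W)) = Sop bra (J Z) (Sop bra Z (J W)) := by
  intro W hW
  obtain ⟨a, ha, b, hb, rfl⟩ := Submodule.mem_sup.mp hZ
  have h : IsGradedBracket bra k mp mn := ⟨halt, hkp, hkn, hpp, hnn, hpn⟩
  have hb' : -b ∈ mn := neg_mem hb
  have hJZ : J (a + b) = Complex.I • (a - b) := by
    rw [map_add, hJp a ha, hJn b hb, smul_sub, sub_eq_add_neg]
  rw [Sop_eq_coshSqrt, Sop_eq_coshSqrt, hJZ, adC_I_smul_sq]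
  have hcomm := commute_adC_sq bra (h.commute_bra_add_sq_bra_sub_sq hjac hsup ha hb)
  refine map_coshSqrt_coshSqrt_apply (fun w hw => ?_) (fun w hw => ?_) (fun w hw => ?_)
    (fun w hw => ?_) hcomm.neg_right hW
  · rw [adC_sq_apply]
    exact h.bra_add_bra_add_mem_sup ha hb hw
  · rw [neg_apply, adC_sq_apply, sub_eq_add_neg]
    exact neg_mem (h.bra_add_bra_add_mem_sup ha hb' hw)
  · rw [neg_apply, adC_sq_apply, adC_sq_apply]
    exact h.map_bra_add_bra_add hJp hJn ha hb hw
  · have hsub := h.map_bra_add_bra_add hJp hJn ha hb' hw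
    rw [← sub_eq_add_neg, sub_neg_eq_add] at hsub
    rw [neg_apply, adC_sq_apply, adC_sq_apply, map_neg, hsub, neg_neg]

/-- For every Z ∈ m, J ∘ S_{JZ} ∘ S_Z = S_{JZ} ∘ S_Z ∘ J as ℂ-linear maps from m to m. -/
theorem statement6 {L : Type*} [NormedAddCommGroup L] [NormedSpace ℂ L] [FiniteDimensional ℂ L]
    (bra : L →ₗ[ℂ] L →ₗ[ℂ] L)
    (halt : ∀ x : L, bra x x = 0)
    (hjac : ∀ x y z : L, bra x (bra y z) = bra (bra x y) z + bra y (bra x z))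
    (k mp mn : Submodule ℂ L)
    (hsup : k ⊔ (mp ⊔ mn) = ⊤)
    (hd1 : Disjoint k (mp ⊔ mn))
    (hd2 : Disjoint mp mn)
    (hkk : ∀ x ∈ k, ∀ y ∈ k, bra x y ∈ k)
    (hkp : ∀ x ∈ k, ∀ y ∈ mp, bra x y ∈ mp)
    (hkn : ∀ x ∈ k, ∀ y ∈ mn, bra x y ∈ mn)
    (hpp : ∀ x ∈ mp, ∀ y ∈ mp, bra x y = 0)
    (hnn : ∀ x ∈ mn, ∀ y ∈ mn, bra x y = 0)
    (hpn : ∀ x ∈ mp, ∀ y ∈ mn, bra x y ∈ k)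
    (J : L →ₗ[ℂ] L)
    (hJp : ∀ x ∈ mp, J x = Complex.I • x)
    (hJn : ∀ x ∈ mn, J x = -(Complex.I • x))
    (Z : L) (hZ : Z ∈ mp ⊔ mn) :
    ∀ W ∈ mp ⊔ mn,
      J (Sop bra (J Z) (Sop bra Z W)) = Sop bra (J Z) (Sop bra Z (J W)) :=
  statement6_general bra halt hjac k mp mn hsup hkp hkn hpp hnn hpn J hJp hJn Z hZ
end
end

section
/- For every Z ∈ m, the element P(Z) = ⁅Υ, exp(ad_Z)(Υ)⁆ lies in m, and P(Z) = -J(E_Z(JZ)) = E_{JZ}(Z). -/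
noncomputable section

variable {L : Type*} [NormedAddCommGroup L] [NormedSpace ℂ L] [FiniteDimensional ℂ L]

/-!
Write A = ad_Z. Splitting the exponential series into even and odd powers gives
exp A = 1 + (E_Z + F_Z) A, and A Υ = -JZ, so exp(A) Υ = Υ - E_Z(JZ) - F_Z(JZ). Since A
exchanges k and m, E_Z(JZ) ∈ m and F_Z(JZ) ∈ k; bracketing with Υ kills Υ and the k-part and
acts as J on the m-part, so P(Z) = -J(E_Z(JZ)). For the second formula, ⁅x, Jy⁆ = -⁅Jx, y⁆ on m
and ⁅Jx, y⁆ = J⁅x, y⁆ for y ∈ k give ad_{JZ}² = -J A² J on m, hence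
ad_{JZ}^{2n} Z = -J A^{2n}(JZ) termwise.
-/

open Function

namespace ContinuousLinearMap

variable {E : Type*} [NormedAddCommGroup E] [NormedSpace ℂ E]

lemma norm_pow_le_pow_norm (T : E →L[ℂ] E) : ∀ n : ℕ, ‖T ^ n‖ ≤ ‖T‖ ^ n
  | 0 => by simpa [one_def] using norm_id_le
  | n + 1 => norm_pow_le' T n.succ_pos

lemma summable_inv_factorial_smul_pow [CompleteSpace E] (T : E →L[ℂ] E) {c e : ℕ → ℕ}
    (he : Injective e) (hce : ∀ n, e n ≤ c n) :
    Summable fun n => ((c n).factorial : ℂ)⁻¹ • T ^ e n := by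
  refine .of_norm_bounded ((Real.summable_pow_div_factorial ‖T‖).comp_injective he) fun n => ?_
  rw [norm_smul, norm_inv, Complex.norm_natCast, Function.comp_apply, div_eq_inv_mul]
  gcongr
  · exact hce n
  · exact norm_pow_le_pow_norm T _

lemma tsum_apply_mem_s9 {S S' : Submodule ℂ E} (hS' : IsClosed (S' : Set E)) {f : ℕ → E →L[ℂ] E}
    (hf : ∀ n, ∀ x ∈ S, f n x ∈ S') {x : E} (hx : x ∈ S) : (∑' n, f n) x ∈ S' := by
  by_cases hs : Summable f
  · rw [← apply_apply x, (apply ℂ E x).map_tsum hs]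
    exact tsum_mem hS' fun n => hf n x hx
  · simp [tsum_eq_zero_of_not_summable hs]

end ContinuousLinearMap

open ContinuousLinearMap

lemma expOp_eq_one_add_mul (T : L →L[ℂ] L) :
    expOp T = 1 + (∑' n : ℕ, (((2 * n + 1).factorial : ℂ)⁻¹) • T ^ (2 * n) +
      ∑' n : ℕ, (((2 * n + 2).factorial : ℂ)⁻¹) • T ^ (2 * n + 1)) * T := by
  have hexp : Summable fun n : ℕ => (n.factorial : ℂ)⁻¹ • T ^ n :=
    summable_inv_factorial_smul_pow T injective_id le_refl
  have hg : Summable fun n : ℕ => ((n + 1).factorial : ℂ)⁻¹ • T ^ n :=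
    summable_inv_factorial_smul_pow T injective_id fun _ => Nat.le_succ _
  have hsplit := tsum_even_add_odd (f := fun n : ℕ => ((n + 1).factorial : ℂ)⁻¹ • T ^ n)
    (hg.comp_injective (mul_right_injective₀ two_ne_zero))
    (hg.comp_injective ((add_left_injective 1).comp (mul_right_injective₀ two_ne_zero)))
  simp only [add_assoc, Nat.reduceAdd] at hsplit
  rw [expOp, hexp.tsum_eq_zero_add, hsplit, ← hg.tsum_mul_right]
  simp [pow_succ]

lemma expOp_adC (bra : L →ₗ[ℂ] L →ₗ[ℂ] L) (Z : L) :
    expOp (adC bra Z) = 1 + (Eop bra Z + Fop bra Z) * adC bra Z :=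
  expOp_eq_one_add_mul _

@[simp]
lemma adC_apply (bra : L →ₗ[ℂ] L →ₗ[ℂ] L) (Z x : L) : adC bra Z x = bra Z x := rfl

section Graded

variable (bra : L →ₗ[ℂ] L →ₗ[ℂ] L) {k m : Submodule ℂ L}

lemma adC_pow_apply_mem (hmm : ∀ x ∈ m, ∀ y ∈ m, bra x y ∈ k)
    (hmk : ∀ x ∈ m, ∀ y ∈ k, bra x y ∈ m) {Z W : L} (hZ : Z ∈ m) (hW : W ∈ m) (n : ℕ) :
    (adC bra Z ^ (2 * n)) W ∈ m ∧ (adC bra Z ^ (2 * n + 1)) W ∈ k := by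
  induction n with
  | zero => simpa using ⟨hW, hmm Z hZ W hW⟩
  | succ n ih =>
    have heven : (adC bra Z ^ (2 * (n + 1))) W ∈ m := by
      rw [mul_add, mul_one, pow_succ', mul_apply_eq_comp, adC_apply]
      exact hmk Z hZ _ ih.2
    refine ⟨heven, ?_⟩
    rw [pow_succ', mul_apply_eq_comp, adC_apply]
    exact hmm Z hZ _ heven

lemma Eop_apply_mem_s9 (hmm : ∀ x ∈ m, ∀ y ∈ m, bra x y ∈ k)
    (hmk : ∀ x ∈ m, ∀ y ∈ k, bra x y ∈ m) {Z W : L} (hZ : Z ∈ m) (hW : W ∈ m) :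
    Eop bra Z W ∈ m :=
  tsum_apply_mem_s9 m.closed_of_finiteDimensional
    (fun n _ hx => m.smul_mem _ (adC_pow_apply_mem bra hmm hmk hZ hx n).1) hW

lemma Fop_apply_mem_s9 (hmm : ∀ x ∈ m, ∀ y ∈ m, bra x y ∈ k)
    (hmk : ∀ x ∈ m, ∀ y ∈ k, bra x y ∈ m) {Z W : L} (hZ : Z ∈ m) (hW : W ∈ m) :
    Fop bra Z W ∈ k :=
  tsum_apply_mem_s9 k.closed_of_finiteDimensional
    (fun n _ hx => k.smul_mem _ (adC_pow_apply_mem bra hmm hmk hZ hx n).2) hW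

end Graded

section Decomposition

variable {V : Type*} [AddCommGroup V] [Module ℂ V] (bra : V →ₗ[ℂ] V →ₗ[ℂ] V) (J : V →ₗ[ℂ] V)
  {k mp mn : Submodule ℂ V}

lemma bra_mem_of_mem_sup_of_mem_sup (halt : bra.IsAlt) (hpp : ∀ x ∈ mp, ∀ y ∈ mp, bra x y = 0)
    (hnn : ∀ x ∈ mn, ∀ y ∈ mn, bra x y = 0) (hpn : ∀ x ∈ mp, ∀ y ∈ mn, bra x y ∈ k) :
    ∀ x ∈ mp ⊔ mn, ∀ y ∈ mp ⊔ mn, bra x y ∈ k := by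
  intro x hx y hy
  obtain ⟨p, hp, q, hq, rfl⟩ := Submodule.mem_sup.mp hx
  obtain ⟨p', hp', q', hq', rfl⟩ := Submodule.mem_sup.mp hy
  simp only [map_add, LinearMap.add_apply, hpp p hp p' hp', hnn q hq q' hq', ← halt.neg p' q]
  exact add_mem (add_mem k.zero_mem (neg_mem (hpn p' hp' q hq)))
    (add_mem (hpn p hp q' hq') k.zero_mem)

lemma bra_mem_sup_of_mem_sup_of_mem (halt : bra.IsAlt) (hkp : ∀ x ∈ k, ∀ y ∈ mp, bra x y ∈ mp)
    (hkn : ∀ x ∈ k, ∀ y ∈ mn, bra x y ∈ mn) :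
    ∀ x ∈ mp ⊔ mn, ∀ y ∈ k, bra x y ∈ mp ⊔ mn := by
  intro x hx y hy
  obtain ⟨p, hp, q, hq, rfl⟩ := Submodule.mem_sup.mp hx
  rw [map_add, LinearMap.add_apply, ← halt.neg y p, ← halt.neg y q]
  exact add_mem (Submodule.mem_sup_left (neg_mem (hkp y hy p hp)))
    (Submodule.mem_sup_right (neg_mem (hkn y hy q hq)))

lemma J_mem_sup (hJp : ∀ x ∈ mp, J x = Complex.I • x)
    (hJn : ∀ x ∈ mn, J x = -(Complex.I • x)) :
    ∀ x ∈ mp ⊔ mn, J x ∈ mp ⊔ mn := by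
  intro x hx
  obtain ⟨p, hp, q, hq, rfl⟩ := Submodule.mem_sup.mp hx
  rw [map_add, hJp p hp, hJn q hq]
  exact add_mem (Submodule.mem_sup_left (mp.smul_mem _ hp))
    (Submodule.mem_sup_right (neg_mem (mn.smul_mem _ hq)))

lemma J_J_of_mem_sup (hJp : ∀ x ∈ mp, J x = Complex.I • x)
    (hJn : ∀ x ∈ mn, J x = -(Complex.I • x)) :
    ∀ x ∈ mp ⊔ mn, J (J x) = -x := by
  intro x hx
  obtain ⟨p, hp, q, hq, rfl⟩ := Submodule.mem_sup.mp hx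
  rw [map_add, hJp p hp, hJn q hq, map_add, map_neg, map_smul, map_smul, hJp p hp, hJn q hq]
  simp only [smul_neg, smul_smul, Complex.I_mul_I]
  module

lemma bra_J_right_of_mem_sup (hJp : ∀ x ∈ mp, J x = Complex.I • x)
    (hJn : ∀ x ∈ mn, J x = -(Complex.I • x))
    (hpp : ∀ x ∈ mp, ∀ y ∈ mp, bra x y = 0) (hnn : ∀ x ∈ mn, ∀ y ∈ mn, bra x y = 0) :
    ∀ x ∈ mp ⊔ mn, ∀ y ∈ mp ⊔ mn, bra x (J y) = -bra (J x) y := by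
  intro x hx y hy
  obtain ⟨p, hp, q, hq, rfl⟩ := Submodule.mem_sup.mp hx
  obtain ⟨p', hp', q', hq', rfl⟩ := Submodule.mem_sup.mp hy
  rw [map_add J, map_add J, hJp p hp, hJn q hq, hJp p' hp', hJn q' hq']
  simp only [map_add, map_smul, map_neg, LinearMap.add_apply, LinearMap.smul_apply,
    LinearMap.neg_apply, hpp p hp p' hp', hnn q hq q' hq', smul_zero, neg_zero, zero_add, add_zero]
  module

lemma bra_J_left_of_mem_sup_of_mem (hJp : ∀ x ∈ mp, J x = Complex.I • x)
    (hJn : ∀ x ∈ mn, J x = -(Complex.I • x))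
    (halt : bra.IsAlt) (hkp : ∀ x ∈ k, ∀ y ∈ mp, bra x y ∈ mp)
    (hkn : ∀ x ∈ k, ∀ y ∈ mn, bra x y ∈ mn) :
    ∀ x ∈ mp ⊔ mn, ∀ y ∈ k, bra (J x) y = J (bra x y) := by
  intro x hx y hy
  obtain ⟨p, hp, q, hq, rfl⟩ := Submodule.mem_sup.mp hx
  have hpy : bra p y ∈ mp := by rw [← halt.neg y p]; exact neg_mem (hkp y hy p hp)
  have hqy : bra q y ∈ mn := by rw [← halt.neg y q]; exact neg_mem (hkn y hy q hq)
  simp only [map_add, LinearMap.add_apply, hJp p hp, hJn q hq, hJp _ hpy, hJn _ hqy, map_neg,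
    map_smul, LinearMap.neg_apply, LinearMap.smul_apply]

lemma bra_J_bra_J {m : Submodule ℂ V} (hmm : ∀ x ∈ m, ∀ y ∈ m, bra x y ∈ k)
    (hJm : ∀ x ∈ m, J x ∈ m)
    (hJright : ∀ x ∈ m, ∀ y ∈ m, bra x (J y) = -bra (J x) y)
    (hJleft : ∀ x ∈ m, ∀ y ∈ k, bra (J x) y = J (bra x y)) {Z w : V} (hZ : Z ∈ m) (hw : w ∈ m) :
    bra (J Z) (bra (J Z) w) = -J (bra Z (bra Z (J w))) := by
  rw [← neg_neg (bra (J Z) w), ← hJright Z hZ w hw, map_neg,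
    hJleft Z hZ _ (hmm Z hZ _ (hJm w hw))]

end Decomposition

section ComplexStructure

variable (bra : L →ₗ[ℂ] L →ₗ[ℂ] L) (J : L →ₗ[ℂ] L) {k m : Submodule ℂ L}

lemma adC_J_pow_two_mul_apply (hmm : ∀ x ∈ m, ∀ y ∈ m, bra x y ∈ k)
    (hmk : ∀ x ∈ m, ∀ y ∈ k, bra x y ∈ m) (hJm : ∀ x ∈ m, J x ∈ m)
    (hJJ : ∀ x ∈ m, J (J x) = -x) (hJright : ∀ x ∈ m, ∀ y ∈ m, bra x (J y) = -bra (J x) y)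
    (hJleft : ∀ x ∈ m, ∀ y ∈ k, bra (J x) y = J (bra x y)) {Z w : L} (hZ : Z ∈ m) (hw : w ∈ m)
    (n : ℕ) : (adC bra (J Z) ^ (2 * n)) w = -J ((adC bra Z ^ (2 * n)) (J w)) := by
  induction n with
  | zero => simp [hJJ w hw]
  | succ n ih =>
    have hv := (adC_pow_apply_mem bra hmm hmk hZ (hJm w hw) n).1
    rw [show 2 * (n + 1) = 2 + 2 * n by ring, pow_add, pow_add, mul_apply_eq_comp,
      mul_apply_eq_comp, ih, sq, sq]
    simp only [mul_apply_eq_comp, adC_apply, map_neg,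
      bra_J_bra_J bra J hmm hJm hJright hJleft hZ (hJm _ hv), hJJ _ hv, neg_neg]

lemma Eop_J_self_apply (hmm : ∀ x ∈ m, ∀ y ∈ m, bra x y ∈ k)
    (hmk : ∀ x ∈ m, ∀ y ∈ k, bra x y ∈ m) (hJm : ∀ x ∈ m, J x ∈ m)
    (hJJ : ∀ x ∈ m, J (J x) = -x) (hJright : ∀ x ∈ m, ∀ y ∈ m, bra x (J y) = -bra (J x) y)
    (hJleft : ∀ x ∈ m, ∀ y ∈ k, bra (J x) y = J (bra x y)) {Z : L} (hZ : Z ∈ m) :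
    Eop bra (J Z) Z = -J (Eop bra Z (J Z)) := by
  have hsum (Y : L) :
      Summable fun n : ℕ => (((2 * n + 1).factorial : ℂ)⁻¹) • adC bra Y ^ (2 * n) :=
    summable_inv_factorial_smul_pow _ (mul_right_injective₀ two_ne_zero) fun _ => Nat.le_succ _
  have hA : HasSum
      (fun n : ℕ => -J ((((2 * n + 1).factorial : ℂ)⁻¹) • (adC bra Z ^ (2 * n)) (J Z)))
      (-J (Eop bra Z (J Z))) :=
    (hsum Z).hasSum.mapL (-(J.toContinuousLinearMap.comp (apply ℂ L (J Z))))
  have hB : HasSum (fun n : ℕ => (((2 * n + 1).factorial : ℂ)⁻¹) • (adC bra (J Z) ^ (2 * n)) Z)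
      (Eop bra (J Z) Z) :=
    (hsum (J Z)).hasSum.mapL (apply ℂ L Z)
  refine hB.unique ?_
  simpa [adC_J_pow_two_mul_apply bra J hmm hmk hJm hJJ hJright hJleft hZ hZ] using hA

end ComplexStructure

theorem statement9_general {L : Type*} [NormedAddCommGroup L] [NormedSpace ℂ L] [FiniteDimensional ℂ L]
    (bra : L →ₗ[ℂ] L →ₗ[ℂ] L)
    (halt : ∀ x : L, bra x x = 0)
    (k mp mn : Submodule ℂ L)
    (hkp : ∀ x ∈ k, ∀ y ∈ mp, bra x y ∈ mp)
    (hkn : ∀ x ∈ k, ∀ y ∈ mn, bra x y ∈ mn)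
    (hpp : ∀ x ∈ mp, ∀ y ∈ mp, bra x y = 0)
    (hnn : ∀ x ∈ mn, ∀ y ∈ mn, bra x y = 0)
    (hpn : ∀ x ∈ mp, ∀ y ∈ mn, bra x y ∈ k)
    (J : L →ₗ[ℂ] L)
    (hJp : ∀ x ∈ mp, J x = Complex.I • x)
    (hJn : ∀ x ∈ mn, J x = -(Complex.I • x))
    (Υ : L)
    (hUk : ∀ X ∈ k, bra Υ X = 0)
    (hUm : ∀ W ∈ mp ⊔ mn, bra Υ W = J W)
    (Z : L) (hZ : Z ∈ mp ⊔ mn) :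
    bra Υ (expOp (adC bra Z) Υ) ∈ mp ⊔ mn ∧
    bra Υ (expOp (adC bra Z) Υ) = -(J (Eop bra Z (J Z))) ∧
    bra Υ (expOp (adC bra Z) Υ) = Eop bra (J Z) Z := by
  have hmm := bra_mem_of_mem_sup_of_mem_sup bra halt hpp hnn hpn
  have hmk := bra_mem_sup_of_mem_sup_of_mem bra halt hkp hkn
  have hJm := J_mem_sup J hJp hJn
  have hJZ : J Z ∈ mp ⊔ mn := hJm Z hZ
  have hE : Eop bra Z (J Z) ∈ mp ⊔ mn := Eop_apply_mem_s9 bra hmm hmk hZ hJZ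
  have hF : Fop bra Z (J Z) ∈ k := Fop_apply_mem_s9 bra hmm hmk hZ hJZ
  have hAΥ : adC bra Z Υ = -J Z := by rw [adC_apply, ← LinearMap.IsAlt.neg halt, hUm Z hZ]
  have hP : bra Υ (expOp (adC bra Z) Υ) = -J (Eop bra Z (J Z)) := by
    simp only [expOp_adC, add_apply, one_apply_eq_self, mul_apply_eq_comp, hAΥ, map_neg, map_add,
      halt, hUm _ hE, hUk _ hF, zero_add, add_zero]
  have hEJ := Eop_J_self_apply bra J hmm hmk hJm (J_J_of_mem_sup J hJp hJn)
    (bra_J_right_of_mem_sup bra J hJp hJn hpp hnn)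
    (bra_J_left_of_mem_sup_of_mem bra J hJp hJn halt hkp hkn) hZ
  exact ⟨hP ▸ neg_mem (hJm _ hE), hP, hP.trans hEJ.symm⟩

/-- For every Z ∈ m, P(Z) = ⁅Υ, exp(ad_Z)(Υ)⁆ lies in m, and P(Z) = -J(E_Z(JZ)) = E_{JZ}(Z). -/
theorem statement9 {L : Type*} [NormedAddCommGroup L] [NormedSpace ℂ L] [FiniteDimensional ℂ L]
    (bra : L →ₗ[ℂ] L →ₗ[ℂ] L)
    (halt : ∀ x : L, bra x x = 0)
    (hjac : ∀ x y z : L, bra x (bra y z) = bra (bra x y) z + bra y (bra x z))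
    (k mp mn : Submodule ℂ L)
    (hsup : k ⊔ (mp ⊔ mn) = ⊤)
    (hd1 : Disjoint k (mp ⊔ mn))
    (hd2 : Disjoint mp mn)
    (hkk : ∀ x ∈ k, ∀ y ∈ k, bra x y ∈ k)
    (hkp : ∀ x ∈ k, ∀ y ∈ mp, bra x y ∈ mp)
    (hkn : ∀ x ∈ k, ∀ y ∈ mn, bra x y ∈ mn)
    (hpp : ∀ x ∈ mp, ∀ y ∈ mp, bra x y = 0)
    (hnn : ∀ x ∈ mn, ∀ y ∈ mn, bra x y = 0)
    (hpn : ∀ x ∈ mp, ∀ y ∈ mn, bra x y ∈ k)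
    (J : L →ₗ[ℂ] L)
    (hJp : ∀ x ∈ mp, J x = Complex.I • x)
    (hJn : ∀ x ∈ mn, J x = -(Complex.I • x))
    (Υ : L)
    (hUk : ∀ X ∈ k, bra Υ X = 0)
    (hUm : ∀ W ∈ mp ⊔ mn, bra Υ W = J W)
    (Z : L) (hZ : Z ∈ mp ⊔ mn) :
    bra Υ (expOp (adC bra Z) Υ) ∈ mp ⊔ mn ∧
    bra Υ (expOp (adC bra Z) Υ) = -(J (Eop bra Z (J Z))) ∧
    bra Υ (expOp (adC bra Z) Υ) = Eop bra (J Z) Z :=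
  statement9_general bra halt k mp mn hkp hkn hpp hnn hpn J hJp hJn Υ hUk hUm Z hZ
end
end

section
/- Let Z, A ∈ m and ν₁, ν₂ ∈ ℂ satisfy ad_Z²(A) = ν₁·A and ad_{JZ}²(A) = ν₂·A. Then ad_Z²(JA) = ν₂·(JA) and ad_{JZ}²(JA) = ν₁·(JA). -/
/-!
Write `Z = Z⁺ + Z⁻` and `A = A⁺ + A⁻`. Since `m⁺` and `m⁻` are abelian, `ad_Z² A` is the sum of the four
terms `⁅Z^ε, ⁅Z^δ, A^η⁆⁆` with `δ ≠ η`, each lying in `m^ε`. Replacing `Z` by `JZ` or `A` by `JA` multiplies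
every term by a power of `i`, and comparing these factors gives the identity `ad_Z² ∘ J = J ∘ ad_{JZ}²`
on `m`. Applied to `Z` and to `JZ` (using `J² = -1`), it exchanges the two eigenvalue equations.
-/

section ComplexStructure

variable {R M : Type*} [CommRing R] [AddCommGroup M] [Module R M]
  {mp mn : Submodule R M} {J : M →ₗ[R] M} {c : R}

theorem map_add_eq_smul_sub_smul (hJp : ∀ x ∈ mp, J x = c • x) (hJn : ∀ x ∈ mn, J x = -(c • x))
    {x y : M} (hx : x ∈ mp) (hy : y ∈ mn) : J (x + y) = c • x - c • y := by
  rw [map_add, hJp x hx, hJn y hy, sub_eq_add_neg]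

theorem map_mem_sup (hJp : ∀ x ∈ mp, J x = c • x) (hJn : ∀ x ∈ mn, J x = -(c • x))
    {Z : M} (hZ : Z ∈ mp ⊔ mn) : J Z ∈ mp ⊔ mn := by
  obtain ⟨x, hx, y, hy, rfl⟩ := Submodule.mem_sup.mp hZ
  rw [map_add_eq_smul_sub_smul hJp hJn hx hy]
  exact sub_mem (Submodule.mem_sup_left (mp.smul_mem c hx))
    (Submodule.mem_sup_right (mn.smul_mem c hy))

theorem map_map_eq_neg (hc : c * c = -1)
    (hJp : ∀ x ∈ mp, J x = c • x) (hJn : ∀ x ∈ mn, J x = -(c • x))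
    {Z : M} (hZ : Z ∈ mp ⊔ mn) : J (J Z) = -Z := by
  obtain ⟨x, hx, y, hy, rfl⟩ := Submodule.mem_sup.mp hZ
  rw [map_add_eq_smul_sub_smul hJp hJn hx hy, map_sub, map_smul, map_smul, hJp x hx, hJn y hy]
  linear_combination (norm := module) hc • x + hc • y

end ComplexStructure

section LieGrading

variable {R L : Type*} [CommRing R] [LieRing L] [LieAlgebra R L]
  {k mp mn : Submodule R L} {J : L →ₗ[R] L} {c : R}

omit [LieAlgebra R L] in
theorem lie_add_lie_add_add_of_lie_eq_zero {x y u v : L} (hxu : ⁅x, u⁆ = 0) (hyv : ⁅y, v⁆ = 0) :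
    ⁅x + y, ⁅x + y, u + v⁆⁆ = ⁅x, ⁅x, v⁆⁆ + ⁅x, ⁅y, u⁆⁆ + ⁅y, ⁅x, v⁆⁆ + ⁅y, ⁅y, u⁆⁆ := by
  simp only [lie_add, add_lie, hxu, hyv, zero_add, add_zero]
  abel

theorem lie_mem_comm {M : Submodule R L} {x y : L} : ⁅x, y⁆ ∈ M ↔ ⁅y, x⁆ ∈ M := by
  rw [← lie_skew, neg_mem_iff]

theorem lie_lie_map_eq_map_lie_lie (hc : c * c = -1)
    (hkp : ∀ x ∈ k, ∀ y ∈ mp, ⁅x, y⁆ ∈ mp) (hkn : ∀ x ∈ k, ∀ y ∈ mn, ⁅x, y⁆ ∈ mn)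
    (hpp : ∀ x ∈ mp, ∀ y ∈ mp, ⁅x, y⁆ = 0) (hnn : ∀ x ∈ mn, ∀ y ∈ mn, ⁅x, y⁆ = 0)
    (hpn : ∀ x ∈ mp, ∀ y ∈ mn, ⁅x, y⁆ ∈ k)
    (hJp : ∀ x ∈ mp, J x = c • x) (hJn : ∀ x ∈ mn, J x = -(c • x))
    {Z A : L} (hZ : Z ∈ mp ⊔ mn) (hA : A ∈ mp ⊔ mn) :
    ⁅Z, ⁅Z, J A⁆⁆ = J ⁅J Z, ⁅J Z, A⁆⁆ := by
  obtain ⟨Zp, hZp, Zn, hZn, rfl⟩ := Submodule.mem_sup.mp hZ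
  obtain ⟨Ap, hAp, An, hAn, rfl⟩ := Submodule.mem_sup.mp hA
  have hZpAp := hpp Zp hZp Ap hAp
  have hZnAn := hnn Zn hZn An hAn
  have hZpAn : ⁅Zp, An⁆ ∈ k := hpn Zp hZp An hAn
  have hZnAp : ⁅Zn, Ap⁆ ∈ k := lie_mem_comm.mp (hpn Ap hAp Zn hZn)
  set P := ⁅Zp, ⁅Zn, Ap⁆⁆ - ⁅Zp, ⁅Zp, An⁆⁆
  set N := ⁅Zn, ⁅Zp, An⁆⁆ - ⁅Zn, ⁅Zn, Ap⁆⁆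
  have hP : P ∈ mp := sub_mem (lie_mem_comm.mp (hkp _ hZnAp Zp hZp))
    (lie_mem_comm.mp (hkp _ hZpAn Zp hZp))
  have hN : N ∈ mn := sub_mem (lie_mem_comm.mp (hkn _ hZpAn Zn hZn))
    (lie_mem_comm.mp (hkn _ hZnAp Zn hZn))
  have hJZ : ⁅J (Zp + Zn), ⁅J (Zp + Zn), Ap + An⁆⁆ = P + N := by
    rw [map_add_eq_smul_sub_smul hJp hJn hZp hZn, sub_eq_add_neg,
      lie_add_lie_add_add_of_lie_eq_zero (by rw [smul_lie, hZpAp, smul_zero])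
        (by rw [neg_lie, smul_lie, hZnAn, smul_zero, neg_zero])]
    simp only [P, N, lie_smul, smul_lie, lie_neg, neg_lie, smul_neg, neg_neg]
    linear_combination (norm := module)
      hc • (⁅Zp, ⁅Zp, An⁆⁆ - ⁅Zp, ⁅Zn, Ap⁆⁆ - ⁅Zn, ⁅Zp, An⁆⁆ + ⁅Zn, ⁅Zn, Ap⁆⁆)
  have hJA : ⁅Zp + Zn, ⁅Zp + Zn, J (Ap + An)⁆⁆ = c • P - c • N := by
    rw [map_add_eq_smul_sub_smul hJp hJn hAp hAn, sub_eq_add_neg,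
      lie_add_lie_add_add_of_lie_eq_zero (by rw [lie_smul, hZpAp, smul_zero])
        (by rw [lie_neg, lie_smul, hZnAn, smul_zero, neg_zero])]
    simp only [P, N, lie_smul, lie_neg]
    module
  rw [hJA, hJZ, map_add, hJp P hP, hJn N hN, sub_eq_add_neg]

end LieGrading

theorem statement12_general
    (L : Type*) [LieRing L] [LieAlgebra ℂ L]
    (k mp mn : Submodule ℂ L)
    (hkp : ∀ x ∈ k, ∀ y ∈ mp, ⁅x, y⁆ ∈ mp)
    (hkn : ∀ x ∈ k, ∀ y ∈ mn, ⁅x, y⁆ ∈ mn)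
    (hpp : ∀ x ∈ mp, ∀ y ∈ mp, ⁅x, y⁆ = 0)
    (hnn : ∀ x ∈ mn, ∀ y ∈ mn, ⁅x, y⁆ = 0)
    (hpn : ∀ x ∈ mp, ∀ y ∈ mn, ⁅x, y⁆ ∈ k)
    (J : L →ₗ[ℂ] L)
    (hJp : ∀ x ∈ mp, J x = Complex.I • x)
    (hJn : ∀ x ∈ mn, J x = -(Complex.I • x))
    (Z A : L) (hZ : Z ∈ mp ⊔ mn) (hA : A ∈ mp ⊔ mn)
    (ν₁ ν₂ : ℂ)
    (hν₁ : ⁅Z, ⁅Z, A⁆⁆ = ν₁ • A)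
    (hν₂ : ⁅J Z, ⁅J Z, A⁆⁆ = ν₂ • A) :
    ⁅Z, ⁅Z, J A⁆⁆ = ν₂ • J A ∧ ⁅J Z, ⁅J Z, J A⁆⁆ = ν₁ • J A := by
  constructor
  · rw [lie_lie_map_eq_map_lie_lie Complex.I_mul_I hkp hkn hpp hnn hpn hJp hJn hZ hA, hν₂,
      map_smul]
  · rw [lie_lie_map_eq_map_lie_lie Complex.I_mul_I hkp hkn hpp hnn hpn hJp hJn
      (map_mem_sup hJp hJn hZ) hA, map_map_eq_neg Complex.I_mul_I hJp hJn hZ,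
      neg_lie, neg_lie, lie_neg, neg_neg, hν₁, map_smul]

/-- If Z, A ∈ m satisfy ad_Z²(A) = ν₁·A and ad_{JZ}²(A) = ν₂·A, then
ad_Z²(JA) = ν₂·(JA) and ad_{JZ}²(JA) = ν₁·(JA). -/
theorem statement12
    (L : Type*) [LieRing L] [LieAlgebra ℂ L] [Module.Finite ℂ L]
    (k mp mn : Submodule ℂ L)
    (hsup : k ⊔ (mp ⊔ mn) = ⊤)
    (hd1 : Disjoint k (mp ⊔ mn))
    (hd2 : Disjoint mp mn)
    (hkk : ∀ x ∈ k, ∀ y ∈ k, ⁅x, y⁆ ∈ k)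
    (hkp : ∀ x ∈ k, ∀ y ∈ mp, ⁅x, y⁆ ∈ mp)
    (hkn : ∀ x ∈ k, ∀ y ∈ mn, ⁅x, y⁆ ∈ mn)
    (hpp : ∀ x ∈ mp, ∀ y ∈ mp, ⁅x, y⁆ = 0)
    (hnn : ∀ x ∈ mn, ∀ y ∈ mn, ⁅x, y⁆ = 0)
    (hpn : ∀ x ∈ mp, ∀ y ∈ mn, ⁅x, y⁆ ∈ k)
    (J : L →ₗ[ℂ] L)
    (hJp : ∀ x ∈ mp, J x = Complex.I • x)
    (hJn : ∀ x ∈ mn, J x = -(Complex.I • x))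
    (Z A : L) (hZ : Z ∈ mp ⊔ mn) (hA : A ∈ mp ⊔ mn)
    (ν₁ ν₂ : ℂ)
    (hν₁ : ⁅Z, ⁅Z, A⁆⁆ = ν₁ • A)
    (hν₂ : ⁅J Z, ⁅J Z, A⁆⁆ = ν₂ • A) :
    ⁅Z, ⁅Z, J A⁆⁆ = ν₂ • J A ∧ ⁅J Z, ⁅J Z, J A⁆⁆ = ν₁ • J A :=
  statement12_general L k mp mn hkp hkn hpp hnn hpn J hJp hJn Z A hZ hA ν₁ ν₂ hν₁ hν₂
end

section
/- Let ℓ > 0 and c be real numbers, and set r = ½·arsinh(½(ℓ⁻¹+ℓ)·sinh(2c)) and s = ½·arctan(½(ℓ⁻¹-ℓ)·tanh(2c)). Then cosh(2c) = cosh(2r)·cos(2s) and ½(ℓ⁻¹-ℓ)·sinh(2c) = cosh(2r)·sin(2s). -/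
/-!
With `a = (ℓ⁻¹ + ℓ)/2` and `b = (ℓ⁻¹ - ℓ)/2` one has `a² = 1 + b²`, and this single identity drives
everything: `cosh (arsinh x) = √(1 + x²)`, while `cos (arctan y)` and `sin (arctan y)` are `1/√(1 + y²)`
and `y/√(1 + y²)`. For `x = a sinh t` and `y = b tanh t`, the identity `a² = 1 + b²` together with
`cosh² t = 1 + sinh² t` gives `1 + x² = cosh² t · (1 + y²)`, so the square roots cancel.
-/

open Real

namespace Real

variable {a b : ℝ}

theorem cosh_arsinh_mul_sinh (hab : a ^ 2 = 1 + b ^ 2) (t : ℝ) :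
    cosh (arsinh (a * sinh t)) = cosh t * √(1 + (b * tanh t) ^ 2) := by
  have hcosh : 0 < cosh t := cosh_pos t
  have hsq : 1 + (a * sinh t) ^ 2 = cosh t ^ 2 * (1 + (b * tanh t) ^ 2) := by
    rw [tanh_eq_sinh_div_cosh, mul_pow, hab]
    field_simp
    linear_combination -cosh_sq' t
  rw [cosh_arsinh, hsq, sqrt_mul (sq_nonneg _), sqrt_sq hcosh.le]

theorem cosh_arsinh_mul_cos_arctan (hab : a ^ 2 = 1 + b ^ 2) (t : ℝ) :
    cosh (arsinh (a * sinh t)) * cos (arctan (b * tanh t)) = cosh t := by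
  have hroot : √(1 + (b * tanh t) ^ 2) ≠ 0 := by positivity
  rw [cosh_arsinh_mul_sinh hab, cos_arctan]
  field_simp

theorem cosh_arsinh_mul_sin_arctan (hab : a ^ 2 = 1 + b ^ 2) (t : ℝ) :
    cosh (arsinh (a * sinh t)) * sin (arctan (b * tanh t)) = b * sinh t := by
  have hroot : √(1 + (b * tanh t) ^ 2) ≠ 0 := by positivity
  have hcosh : cosh t ≠ 0 := (cosh_pos t).ne'
  rw [cosh_arsinh_mul_sinh hab, sin_arctan, tanh_eq_sinh_div_cosh]
  field_simp

end Real

theorem sq_inv_add_self_div_two {ℓ : ℝ} (hℓ : ℓ ≠ 0) :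
    ((ℓ⁻¹ + ℓ) / 2) ^ 2 = 1 + ((ℓ⁻¹ - ℓ) / 2) ^ 2 := by
  field_simp
  ring

/-- For ℓ > 0 and c real, with r = ½ arsinh(½(ℓ⁻¹+ℓ)sinh 2c) and
s = ½ arctan(½(ℓ⁻¹-ℓ)tanh 2c), one has cosh 2c = cosh 2r · cos 2s and
½(ℓ⁻¹-ℓ)sinh 2c = cosh 2r · sin 2s. -/
theorem statement17 (ℓ c r s : ℝ) (hℓ : 0 < ℓ)
    (hr : r = Real.arsinh ((ℓ⁻¹ + ℓ) / 2 * Real.sinh (2 * c)) / 2)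
    (hs : s = Real.arctan ((ℓ⁻¹ - ℓ) / 2 * Real.tanh (2 * c)) / 2) :
    Real.cosh (2 * c) = Real.cosh (2 * r) * Real.cos (2 * s) ∧
    (ℓ⁻¹ - ℓ) / 2 * Real.sinh (2 * c) = Real.cosh (2 * r) * Real.sin (2 * s) := by
  have hab := sq_inv_add_self_div_two hℓ.ne'
  subst hr hs
  rw [mul_div_cancel₀ _ two_ne_zero, mul_div_cancel₀ _ two_ne_zero]
  exact ⟨(cosh_arsinh_mul_cos_arctan hab _).symm, (cosh_arsinh_mul_sin_arctan hab _).symm⟩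
end

section
/- Let g be a finite-dimensional complex Lie algebra with Killing form κ, endowed with a norm making it a normed ℂ-vector space, and for an endomorphism T of g let exp(T) = Σ_{n≥0} Tⁿ/n! be the exponential in the Banach algebra of continuous endomorphisms of g. Then for all Z, Υ ∈ g, κ(exp(ad_Z)(Υ), Υ) = κ(Υ, Υ) - 2·κ(Y, Y), where Y = ½(exp(ad_{Z/2}) - exp(ad_{-Z/2}))(Υ) and ad_Z denotes the operator ⁅Z,·⁆. -/
/-! `ad_Z` is skew for `κ` (Jacobi identity plus cyclicity of the trace), so `exp(ad_Z)` and
`exp(-ad_Z)` are `κ`-adjoint and `exp(ad_Z)` preserves `κ`. With `A = exp(ad_{Z/2}) Υ` and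
`B = exp(-ad_{Z/2}) Υ` the left-hand side is `κ(A, B)`, while `κ(A, A) = κ(B, B) = κ(Υ, Υ)`;
expanding `κ(Y, Y)` for `Y = (A - B)/2` gives the identity. -/

noncomputable section

variable {L : Type*} [NormedAddCommGroup L] [NormedSpace ℂ L] [FiniteDimensional ℂ L]

/-- The Killing form κ(x, y) = trace(ad_x ∘ ad_y) of the Lie algebra L with bracket bra. -/
def killing (bra : L →ₗ[ℂ] L →ₗ[ℂ] L) (x y : L) : ℂ :=
  LinearMap.trace ℂ L (bra x ∘ₗ bra y)

open LinearMap NormedSpace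

section Exponential

variable {E : Type*} [NormedAddCommGroup E] [NormedSpace ℂ E]

lemma expOp_eq_exp (T : E →L[ℂ] E) : expOp T = exp T := by
  rw [exp_eq_tsum ℂ]; rfl

variable [CompleteSpace E]

lemma hasSum_expOp_apply (T : E →L[ℂ] E) (x : E) :
    HasSum (fun n : ℕ => ((n.factorial : ℂ)⁻¹) • (T ^ n) x) (expOp T x) := by
  rw [expOp_eq_exp]
  exact (exp_series_hasSum_exp' (𝕂 := ℂ) T).mapL (ContinuousLinearMap.apply ℂ E x)

lemma expOp_add_of_commute {S T : E →L[ℂ] E} (h : Commute S T) :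
    expOp (S + T) = expOp S * expOp T := by
  have hball : ∀ U : E →L[ℂ] E, U ∈ Metric.eball 0 (expSeries ℂ (E →L[ℂ] E)).radius :=
    fun _ => (expSeries_radius_eq_top ℂ (E →L[ℂ] E)).symm ▸ edist_lt_top _ _
  simp only [expOp_eq_exp]
  exact exp_add_of_commute_of_mem_ball h (hball S) (hball T)

lemma expOp_neg_apply_expOp_apply (T : E →L[ℂ] E) (x : E) : expOp (-T) (expOp T x) = x := by
  rw [← mul_apply_eq_comp, ← expOp_add_of_commute (Commute.refl T).neg_left,
    neg_add_cancel, expOp_eq_exp, exp_zero, one_apply_eq_self]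

end Exponential

lemma LinearMap.IsAdjointPair.iterate {R M M₂ : Type*} [CommSemiring R] [AddCommMonoid M]
    [Module R M] [AddCommMonoid M₂] [Module R M₂] {B : M →ₗ[R] M →ₗ[R] M₂} {f g : M → M}
    (h : IsAdjointPair B B f g) (n : ℕ) : IsAdjointPair B B f^[n] g^[n] := by
  induction n with
  | zero => exact isAdjointPair_id
  | succ n ih => rw [Function.iterate_succ, Function.iterate_succ']; exact h.comp ih

section AdjointPair

variable {E : Type*} [NormedAddCommGroup E] [NormedSpace ℂ E] [FiniteDimensional ℂ E]
  {B : E →ₗ[ℂ] E →ₗ[ℂ] ℂ}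

lemma isAdjointPair_expOp {T S : E →L[ℂ] E} (h : IsAdjointPair B B T S) :
    IsAdjointPair B B (expOp T) (expOp S) := fun x y => by
  have hT := (hasSum_expOp_apply T x).mapL (B.flip y).toContinuousLinearMap
  have hS := (hasSum_expOp_apply S y).mapL (B x).toContinuousLinearMap
  have hpow : ∀ n, B ((⇑T)^[n] x) y = B x ((⇑S)^[n] y) := fun n => h.iterate n x y
  simp only [coe_toContinuousLinearMap', flip_apply, map_smul,
    FunLike.coe_pow_eq_iterate, hpow] at hT hS
  exact hT.unique hS

lemma LinearMap.IsAdjointPair.apply_expOp_expOp {T : E →L[ℂ] E}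
    (h : IsAdjointPair B B T (-T : E →L[ℂ] E)) (x y : E) : B (expOp T x) (expOp T y) = B x y := by
  rw [isAdjointPair_expOp h, expOp_neg_apply_expOp_apply]

end AdjointPair

section Killing

variable {E : Type*} [NormedAddCommGroup E] [NormedSpace ℂ E] (bra : E →ₗ[ℂ] E →ₗ[ℂ] E)

def killingBilin : E →ₗ[ℂ] E →ₗ[ℂ] ℂ :=
  ((LinearMap.mul ℂ (Module.End ℂ E)).compr₂ (trace ℂ E)).compl₁₂ bra bra

lemma killingBilin_apply (x y : E) : killingBilin bra x y = killing bra x y := rfl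

lemma killing_comm (x y : E) : killing bra x y = killing bra y x :=
  trace_mul_comm ℂ (bra x) (bra y)

variable [FiniteDimensional ℂ E]

lemma adC_add (z w : E) : adC bra (z + w) = adC bra z + adC bra w := by
  ext; simp [adC]

lemma adC_neg_s19 (z : E) : adC bra (-z) = -adC bra z := by
  ext; simp [adC]

lemma isAdjointPair_killingBilin_adC
    (hjac : ∀ x y z : E, bra x (bra y z) = bra (bra x y) z + bra y (bra x z)) (z : E) :
    IsAdjointPair (killingBilin bra) (killingBilin bra) (adC bra z) (-adC bra z : E →L[ℂ] E) :=
  fun x y => by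
  have ad_bra : ∀ u, bra (bra z u) = bra z * bra u - bra u * bra z := fun u => by
    ext w; simp [hjac z u w]
  have cyclic : trace ℂ E (bra z * bra x * bra y) = trace ℂ E (bra x * (bra y * bra z)) := by
    rw [mul_assoc, trace_mul_comm, mul_assoc]
  change trace ℂ E (bra (bra z x) * bra y) = trace ℂ E (bra x * bra (-bra z y))
  rw [map_neg, ad_bra, ad_bra, sub_mul, mul_neg, mul_sub, map_neg, map_sub, map_sub, cyclic,
    mul_assoc]
  ring

end Killing

theorem statement19_general {L : Type*} [NormedAddCommGroup L] [NormedSpace ℂ L]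
    [FiniteDimensional ℂ L]
    (bra : L →ₗ[ℂ] L →ₗ[ℂ] L)
    (hjac : ∀ x y z : L, bra x (bra y z) = bra (bra x y) z + bra y (bra x z))
    (Z Υ Y : L)
    (hY : Y = (2 : ℂ)⁻¹ •
      (expOp (adC bra ((2 : ℂ)⁻¹ • Z)) Υ - expOp (adC bra (-((2 : ℂ)⁻¹ • Z))) Υ)) :
    killing bra (expOp (adC bra Z) Υ) Υ = killing bra Υ Υ - 2 * killing bra Y Y := by
  set z := (2 : ℂ)⁻¹ • Z
  set A := expOp (adC bra z) Υ
  set B := expOp (adC bra (-z)) Υ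
  have hz := isAdjointPair_killingBilin_adC bra hjac z
  have hz_neg := isAdjointPair_killingBilin_adC bra hjac (-z)
  have hexp : expOp (adC bra Z) = expOp (adC bra z) * expOp (adC bra z) := by
    rw [← expOp_add_of_commute (Commute.refl _), ← adC_add, ← two_smul ℂ z,
      smul_inv_smul₀ two_ne_zero]
  have hcross : killing bra (expOp (adC bra Z) Υ) Υ = killing bra A B := by
    rw [hexp, mul_apply_eq_comp, ← killingBilin_apply, isAdjointPair_expOp hz, ← adC_neg_s19,
      killingBilin_apply]
  have hAA : killing bra A A = killing bra Υ Υ := hz.apply_expOp_expOp Υ Υ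
  have hBB : killing bra B B = killing bra Υ Υ := hz_neg.apply_expOp_expOp Υ Υ
  have hYY : killing bra Y Y = (killing bra A A - killing bra A B - killing bra B A
      + killing bra B B) / 4 := by
    simp only [hY, ← killingBilin_apply, map_smul, map_sub, LinearMap.sub_apply,
      LinearMap.smul_apply, smul_eq_mul]
    ring
  rw [hcross, hYY, hAA, hBB, killing_comm bra B A]
  ring

/-- For all Z, Υ in a finite-dimensional complex Lie algebra with Killing
form κ, κ(exp(ad_Z)(Υ), Υ) = κ(Υ, Υ) - 2·κ(Y, Y), where
Y = ½(exp(ad_{Z/2}) - exp(ad_{-Z/2}))(Υ). -/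
theorem statement19 {L : Type*} [NormedAddCommGroup L] [NormedSpace ℂ L]
    [FiniteDimensional ℂ L]
    (bra : L →ₗ[ℂ] L →ₗ[ℂ] L)
    (halt : ∀ x : L, bra x x = 0)
    (hjac : ∀ x y z : L, bra x (bra y z) = bra (bra x y) z + bra y (bra x z))
    (Z Υ Y : L)
    (hY : Y = (2 : ℂ)⁻¹ •
      (expOp (adC bra ((2 : ℂ)⁻¹ • Z)) Υ - expOp (adC bra (-((2 : ℂ)⁻¹ • Z))) Υ)) :
    killing bra (expOp (adC bra Z) Υ) Υ = killing bra Υ Υ - 2 * killing bra Y Y :=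
  statement19_general bra hjac Z Υ Y hY
end
end
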